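/- arXiv:2209.00449 — 4 statements merged into one kernel-verified Lean document; each statement's English description precedes it below -/
import Mathlib

section
/- Let A be a bounded nonempty set of d×d real matrices that is product bounded, i.e. sup over n ≥ 1 of sup over products A₁⋯Aₙ with each Aᵢ ∈ A of ‖A₁⋯Aₙ‖ is finite. Then there exists a norm N on R^d such that N(A v) ≤ N(v) for every A ∈ A and every v ∈ R^d (equivalently, the operator norm induced by N of every product of elements of A is at most 1). -/
/-- The operator norm induced by the Euclidean norm. -/
noncomputable def eOpNorm {m n : Type*} [Fintype m] [Fintype n] [DecidableEq n]
    (A : Matrix m n ℝ) : ℝ :=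
  ‖LinearMap.toContinuousLinearMap (Matrix.toEuclideanLin A)‖

lemma eOpNorm_le_bound {d : ℕ} (A : Matrix (Fin d) (Fin d) ℝ) (v : EuclideanSpace ℝ (Fin d)) :
    ‖Matrix.toEuclideanLin A v‖ ≤ eOpNorm A * ‖v‖ :=
  (LinearMap.toContinuousLinearMap (Matrix.toEuclideanLin A)).le_opNorm v

lemma toEuclideanLin_mul_apply {d : ℕ} (M A : Matrix (Fin d) (Fin d) ℝ)
    (v : EuclideanSpace ℝ (Fin d)) :
    Matrix.toEuclideanLin (M * A) v = Matrix.toEuclideanLin M (Matrix.toEuclideanLin A v) := by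
  simp [Matrix.toEuclideanLin_apply, Matrix.mulVec_mulVec]

lemma toEuclideanLin_one_apply {d : ℕ} (v : EuclideanSpace ℝ (Fin d)) :
    Matrix.toEuclideanLin (1 : Matrix (Fin d) (Fin d) ℝ) v = v := by
  simp [Matrix.toEuclideanLin_apply]

theorem stmt1 {d : ℕ} (𝒜 : Set (Matrix (Fin d) (Fin d) ℝ)) (hne : 𝒜.Nonempty)
    (hbdd : ∃ R : ℝ, ∀ A ∈ 𝒜, eOpNorm A ≤ R)
    (hpb : ∃ K : ℝ, ∀ n : ℕ, 1 ≤ n → ∀ l : List (Matrix (Fin d) (Fin d) ℝ),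
      l.length = n → (∀ M ∈ l, M ∈ 𝒜) → eOpNorm l.prod ≤ K) :
    ∃ N : Seminorm ℝ (EuclideanSpace ℝ (Fin d)),
      (∀ v : EuclideanSpace ℝ (Fin d), v ≠ 0 → 0 < N v) ∧
      ∀ A ∈ 𝒜, ∀ v : EuclideanSpace ℝ (Fin d), N (Matrix.toEuclideanLin A v) ≤ N v := by
  obtain ⟨K, hK⟩ := hpb
  -- the set of values
  set S : EuclideanSpace ℝ (Fin d) → Set ℝ := fun v =>
    {x | ∃ l : List (Matrix (Fin d) (Fin d) ℝ), (∀ M ∈ l, M ∈ 𝒜) ∧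
      x = ‖Matrix.toEuclideanLin l.prod v‖} with hS
  set f : EuclideanSpace ℝ (Fin d) → ℝ := fun v => sSup (S v) with hf
  have hmem : ∀ v, ‖v‖ ∈ S v := by
    intro v
    exact ⟨[], by simp, by simp [toEuclideanLin_one_apply]⟩
  have hne' : ∀ v, (S v).Nonempty := fun v => ⟨‖v‖, hmem v⟩
  have hub : ∀ v, ∀ x ∈ S v, x ≤ max 1 K * ‖v‖ := by
    intro v x hx
    obtain ⟨l, hl, rfl⟩ := hx
    rcases List.eq_nil_or_concat l with rfl | _
    · simp only [List.prod_nil, toEuclideanLin_one_apply]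
      nlinarith [norm_nonneg v, le_max_left 1 K]
    · have h1 : eOpNorm l.prod ≤ K := by
        apply hK l.length _ l rfl hl
        rcases l with _ | ⟨a, l⟩
        · simp_all
        · simp [Nat.succ_le_succ]
      calc ‖Matrix.toEuclideanLin l.prod v‖ ≤ eOpNorm l.prod * ‖v‖ := eOpNorm_le_bound _ _
        _ ≤ max 1 K * ‖v‖ := by
            apply mul_le_mul_of_nonneg_right (h1.trans (le_max_right 1 K)) (norm_nonneg v)
  have hbdd' : ∀ v, BddAbove (S v) := fun v => ⟨max 1 K * ‖v‖, fun x hx => hub v x hx⟩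
  have hnonneg : ∀ v, 0 ≤ f v := fun v =>
    le_trans (norm_nonneg v) (le_csSup (hbdd' v) (hmem v))
  have key : ∀ v x, x ∈ S v → x ≤ f v := fun v x hx => le_csSup (hbdd' v) hx
  -- the seminorm
  refine ⟨Seminorm.of f ?_ ?_, ?_, ?_⟩
  · -- add_le
    intro x y
    apply Real.sSup_le _ (add_nonneg (hnonneg x) (hnonneg y))
    rintro r ⟨l, hl, rfl⟩
    calc ‖Matrix.toEuclideanLin l.prod (x + y)‖
        ≤ ‖Matrix.toEuclideanLin l.prod x‖ + ‖Matrix.toEuclideanLin l.prod y‖ := by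
          rw [map_add]; exact norm_add_le _ _
      _ ≤ f x + f y := add_le_add (key x _ ⟨l, hl, rfl⟩) (key y _ ⟨l, hl, rfl⟩)
  · -- smul
    intro a v
    rcases eq_or_ne a 0 with rfl | ha
    · simp only [zero_smul, norm_zero, zero_mul]
      have : S (0 : EuclideanSpace ℝ (Fin d)) = {0} := by
        ext x; constructor
        · rintro ⟨l, hl, rfl⟩; simp
        · rintro rfl; exact ⟨[], by simp, by simp [toEuclideanLin_one_apply]⟩
      simp [hf, this]
    · apply le_antisymm
      · apply Real.sSup_le _ (mul_nonneg (norm_nonneg a) (hnonneg v))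
        rintro r ⟨l, hl, rfl⟩
        rw [map_smul, norm_smul]
        exact mul_le_mul_of_nonneg_left (key v _ ⟨l, hl, rfl⟩) (norm_nonneg a)
      · have h2 : f v ≤ ‖a‖⁻¹ * f (a • v) := by
          apply Real.sSup_le _ (mul_nonneg (by positivity) (hnonneg (a • v)))
          rintro r ⟨l, hl, rfl⟩
          have : ‖Matrix.toEuclideanLin l.prod v‖
              = ‖a‖⁻¹ * ‖Matrix.toEuclideanLin l.prod (a • v)‖ := by
            rw [map_smul, norm_smul]
            field_simp
          rw [this]
          exact mul_le_mul_of_nonneg_left (key (a • v) _ ⟨l, hl, rfl⟩) (by positivity)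
        calc ‖a‖ * f v ≤ ‖a‖ * (‖a‖⁻¹ * f (a • v)) :=
              mul_le_mul_of_nonneg_left h2 (norm_nonneg a)
          _ = f (a • v) := by field_simp
  · -- positivity
    intro v hv
    have : (0:ℝ) < ‖v‖ := norm_pos_iff.mpr hv
    exact lt_of_lt_of_le this (key v _ (hmem v))
  · -- invariance
    intro A hA v
    apply Real.sSup_le _ (hnonneg v)
    rintro r ⟨l, hl, rfl⟩
    apply key v
    refine ⟨l ++ [A], ?_, ?_⟩
    · intro M hM
      rcases List.mem_append.mp hM with h | h
      · exact hl M h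
      · simp_all
    · rw [List.prod_append, List.prod_singleton, toEuclideanLin_mul_apply]
end

section
/- Let I be a nonempty index set, and let {Aᵢ} ⊂ M_{d₁}(R), {Bᵢ} ⊂ M_{d₂}(R), {Dᵢ} ⊂ M_{d₁×d₂}(R) be families with ‖Dᵢ‖ ≤ K₀ for all i. For each i let Cᵢ be the block upper triangular matrix with diagonal blocks Aᵢ, Bᵢ and upper-right block Dᵢ. Then for every n ≥ 1 and indices i₁,…,iₙ, writing aₙ, bₙ for the respective maximal product norms (with a₀ = b₀ = 1) and cₙ for that of the Cᵢ, one has max{aₙ, bₙ} ≤ cₙ ≤ max{aₙ, bₙ} + K₀ Σ_{k=1}^{n} a_{k−1} b_{n−k}, where all norms are Euclidean operator norms. -/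
/-- The maximal (supremal) Euclidean operator norm over all products of `n` matrices
from the family `f`. -/
noncomputable def mirF {ι : Type*} {m : Type*} [Fintype m] [DecidableEq m]
    (f : ι → Matrix m m ℝ) (n : ℕ) : ℝ :=
  sSup { x | ∃ l : List ι, l.length = n ∧ x = eOpNorm (l.map f).prod }

open scoped Matrix.Norms.L2Operator
open Matrix

set_option linter.unusedSectionVars false
set_option maxHeartbeats 1000000

section helpers
variable {ι : Type*} {m n : Type*} [Fintype m] [Fintype n] [DecidableEq m] [DecidableEq n]

lemma eOpNorm_nonneg (A : Matrix m n ℝ) : 0 ≤ eOpNorm A := norm_nonneg _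

lemma eOpNorm_mul {p : Type*} [Fintype p] [DecidableEq p] (A : Matrix m n ℝ) (B : Matrix n p ℝ) :
    eOpNorm (A * B) ≤ eOpNorm A * eOpNorm B := Matrix.l2_opNorm_mul A B

lemma eOpNorm_one_le : eOpNorm (1 : Matrix m m ℝ) ≤ 1 := by
  rw [eOpNorm]
  have : Matrix.toEuclideanLin (1 : Matrix m m ℝ) = LinearMap.id := by
    ext x; simp [Matrix.toEuclideanLin_apply]
  rw [this]
  exact ContinuousLinearMap.norm_id_le

lemma eOpNorm_add_le (A B : Matrix m n ℝ) : eOpNorm (A + B) ≤ eOpNorm A + eOpNorm B := by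
  simp only [eOpNorm, map_add]
  exact norm_add_le _ _

lemma eOpNorm_sum_le {α : Type*} (s : Finset α) (g : α → Matrix m n ℝ) :
    eOpNorm (∑ i ∈ s, g i) ≤ ∑ i ∈ s, eOpNorm (g i) := norm_sum_le s g

lemma euclid_norm_sq (x : EuclideanSpace ℝ m) : ‖x‖^2 = ∑ i, x i ^ 2 := by
  rw [EuclideanSpace.norm_eq, Real.sq_sqrt (by positivity)]
  simp [Real.norm_eq_abs, sq_abs]

noncomputable def pairE (u : EuclideanSpace ℝ m) (v : EuclideanSpace ℝ n) :
    EuclideanSpace ℝ (m ⊕ n) := WithLp.toLp 2 (Sum.elim u v)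

lemma pairE_norm_sq (u : EuclideanSpace ℝ m) (v : EuclideanSpace ℝ n) :
    ‖pairE u v‖^2 = ‖u‖^2 + ‖v‖^2 := by
  simp [pairE, euclid_norm_sq, Fintype.sum_sum_type]

lemma pairE_eta (x : EuclideanSpace ℝ (m ⊕ n)) :
    pairE (WithLp.toLp 2 fun i => x (Sum.inl i)) (WithLp.toLp 2 fun j => x (Sum.inr j)) = x := by
  ext p; cases p <;> rfl

lemma sqrt_cancel {a b : ℝ} (ha : 0 ≤ a) (hb : 0 ≤ b) (h : a^2 = b^2) : a = b := by
  nlinarith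

lemma le_of_sq_le {a b : ℝ} (ha : 0 ≤ a) (hb : 0 ≤ b) (h : a^2 ≤ b^2) : a ≤ b := by
  nlinarith

noncomputable def eCLM (A : Matrix m n ℝ) : EuclideanSpace ℝ n →L[ℝ] EuclideanSpace ℝ m :=
  LinearMap.toContinuousLinearMap (Matrix.toEuclideanLin A)

lemma eOpNorm_def' (A : Matrix m n ℝ) : eOpNorm A = ‖eCLM A‖ := rfl

lemma eCLM_le (A : Matrix m n ℝ) (x : EuclideanSpace ℝ n) :
    ‖eCLM A x‖ ≤ eOpNorm A * ‖x‖ := ContinuousLinearMap.le_opNorm _ _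

lemma blocks_apply (A : Matrix m m ℝ) (D : Matrix m n ℝ) (B : Matrix n n ℝ)
    (u : EuclideanSpace ℝ m) (v : EuclideanSpace ℝ n) :
    eCLM (Matrix.fromBlocks A D 0 B) (pairE u v)
      = pairE (eCLM A u + eCLM D v) (eCLM B v) := by
  show WithLp.toLp 2 (Matrix.mulVec (Matrix.fromBlocks A D 0 B) (Sum.elim u v))
      = WithLp.toLp 2 (Sum.elim (Matrix.mulVec A u + Matrix.mulVec D v) (Matrix.mulVec B v))
  rw [Matrix.fromBlocks_mulVec]
  simp

lemma le_blockA (A : Matrix m m ℝ) (D : Matrix m n ℝ) (B : Matrix n n ℝ) :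
    eOpNorm A ≤ eOpNorm (Matrix.fromBlocks A D 0 B) := by
  rw [eOpNorm_def' A]
  apply ContinuousLinearMap.opNorm_le_bound _ (eOpNorm_nonneg _)
  intro u
  have h1 := blocks_apply A D B u 0
  simp only [map_zero, add_zero] at h1
  have hn : ‖eCLM (Matrix.fromBlocks A D 0 B) (pairE u (0 : EuclideanSpace ℝ n))‖ = ‖eCLM A u‖ := by
    apply sqrt_cancel (norm_nonneg _) (norm_nonneg _)
    rw [h1, pairE_norm_sq]; simp
  have hu : ‖pairE u (0 : EuclideanSpace ℝ n)‖ = ‖u‖ := by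
    apply sqrt_cancel (norm_nonneg _) (norm_nonneg _)
    rw [pairE_norm_sq]; simp
  calc ‖eCLM A u‖ = ‖eCLM (Matrix.fromBlocks A D 0 B) (pairE u 0)‖ := hn.symm
    _ ≤ eOpNorm (Matrix.fromBlocks A D 0 B) * ‖pairE u 0‖ := eCLM_le _ _
    _ = eOpNorm (Matrix.fromBlocks A D 0 B) * ‖u‖ := by rw [hu]

lemma le_blockB (A : Matrix m m ℝ) (D : Matrix m n ℝ) (B : Matrix n n ℝ) :
    eOpNorm B ≤ eOpNorm (Matrix.fromBlocks A D 0 B) := by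
  rw [eOpNorm_def' B]
  apply ContinuousLinearMap.opNorm_le_bound _ (eOpNorm_nonneg _)
  intro v
  have h1 := blocks_apply A D B 0 v
  simp only [map_zero, zero_add] at h1
  have hv : ‖pairE (0 : EuclideanSpace ℝ m) v‖ = ‖v‖ := by
    apply sqrt_cancel (norm_nonneg _) (norm_nonneg _)
    rw [pairE_norm_sq]; simp
  have hle : ‖eCLM B v‖ ≤ ‖eCLM (Matrix.fromBlocks A D 0 B) (pairE (0 : EuclideanSpace ℝ m) v)‖ := by
    apply le_of_sq_le (norm_nonneg _) (norm_nonneg _)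
    rw [h1, pairE_norm_sq]
    nlinarith [sq_nonneg ‖eCLM D v‖]
  calc ‖eCLM B v‖ ≤ ‖eCLM (Matrix.fromBlocks A D 0 B) (pairE (0:EuclideanSpace ℝ m) v)‖ := hle
    _ ≤ eOpNorm (Matrix.fromBlocks A D 0 B) * ‖pairE (0:EuclideanSpace ℝ m) v‖ := eCLM_le _ _
    _ = eOpNorm (Matrix.fromBlocks A D 0 B) * ‖v‖ := by rw [hv]

lemma block_upper (A : Matrix m m ℝ) (D : Matrix m n ℝ) (B : Matrix n n ℝ) :
    eOpNorm (Matrix.fromBlocks A D 0 B) ≤ max (eOpNorm A) (eOpNorm B) + eOpNorm D := by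
  have hsplit : Matrix.fromBlocks A D 0 B
      = Matrix.fromBlocks A 0 0 B + Matrix.fromBlocks 0 D 0 0 := by
    rw [Matrix.fromBlocks_add]; simp
  have hdiag : eOpNorm (Matrix.fromBlocks A 0 0 B) ≤ max (eOpNorm A) (eOpNorm B) := by
    rw [eOpNorm_def']
    apply ContinuousLinearMap.opNorm_le_bound _ (le_max_of_le_left (eOpNorm_nonneg _))
    intro x
    rw [← pairE_eta x]
    set u : EuclideanSpace ℝ m := WithLp.toLp 2 fun i => x (Sum.inl i)
    set v : EuclideanSpace ℝ n := WithLp.toLp 2 fun j => x (Sum.inr j)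
    have h1 := blocks_apply A 0 B u v
    have hz : eCLM (0 : Matrix m n ℝ) v = 0 := by
      show WithLp.toLp 2 (Matrix.mulVec 0 v) = 0; simp
    have h1' : eCLM (Matrix.fromBlocks A 0 0 B) (pairE u v) = pairE (eCLM A u) (eCLM B v) := by
      rw [h1, hz, add_zero]
    have hMnn : 0 ≤ max (eOpNorm A) (eOpNorm B) := le_max_of_le_left (eOpNorm_nonneg _)
    apply le_of_sq_le (norm_nonneg _) (mul_nonneg hMnn (norm_nonneg _))
    rw [h1', pairE_norm_sq, mul_pow, pairE_norm_sq, mul_add]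
    have hA' : ‖eCLM A u‖ ≤ max (eOpNorm A) (eOpNorm B) * ‖u‖ :=
      (eCLM_le A u).trans (mul_le_mul_of_nonneg_right (le_max_left _ _) (norm_nonneg u))
    have hB' : ‖eCLM B v‖ ≤ max (eOpNorm A) (eOpNorm B) * ‖v‖ :=
      (eCLM_le B v).trans (mul_le_mul_of_nonneg_right (le_max_right _ _) (norm_nonneg v))
    have h2 := pow_le_pow_left₀ (norm_nonneg _) hA' 2
    have h3 := pow_le_pow_left₀ (norm_nonneg _) hB' 2
    rw [mul_pow] at h2 h3
    linarith
  have hD' : eOpNorm (Matrix.fromBlocks (0 : Matrix m m ℝ) D 0 (0 : Matrix n n ℝ)) ≤ eOpNorm D := by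
    rw [eOpNorm_def']
    apply ContinuousLinearMap.opNorm_le_bound _ (eOpNorm_nonneg _)
    intro x
    rw [← pairE_eta x]
    set u : EuclideanSpace ℝ m := WithLp.toLp 2 fun i => x (Sum.inl i)
    set v : EuclideanSpace ℝ n := WithLp.toLp 2 fun j => x (Sum.inr j)
    have h1 := blocks_apply 0 D 0 u v
    have hz1 : eCLM (0 : Matrix m m ℝ) u = 0 := by show WithLp.toLp 2 (Matrix.mulVec 0 u) = 0; simp
    have hz2 : eCLM (0 : Matrix n n ℝ) v = 0 := by show WithLp.toLp 2 (Matrix.mulVec 0 v) = 0; simp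
    have h1' : eCLM (Matrix.fromBlocks 0 D 0 0) (pairE u v) = pairE (eCLM D v) (0 : EuclideanSpace ℝ n) := by
      rw [h1, hz1, hz2, zero_add]
    have hnv : ‖v‖ ≤ ‖pairE u v‖ := by
      apply le_of_sq_le (norm_nonneg _) (norm_nonneg _)
      rw [pairE_norm_sq]; nlinarith [sq_nonneg ‖u‖]
    have hn : ‖eCLM (Matrix.fromBlocks (0 : Matrix m m ℝ) D 0 (0 : Matrix n n ℝ)) (pairE u v)‖ = ‖eCLM D v‖ := by
      apply sqrt_cancel (norm_nonneg _) (norm_nonneg _)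
      rw [h1', pairE_norm_sq]; simp
    rw [hn]
    calc ‖eCLM D v‖ ≤ eOpNorm D * ‖v‖ := eCLM_le _ _
      _ ≤ eOpNorm D * ‖pairE u v‖ := by
          exact mul_le_mul_of_nonneg_left hnv (eOpNorm_nonneg _)
  calc eOpNorm (Matrix.fromBlocks A D 0 B)
      ≤ eOpNorm (Matrix.fromBlocks A 0 0 B) + eOpNorm (Matrix.fromBlocks (0 : Matrix m m ℝ) D 0 (0 : Matrix n n ℝ)) := by
        rw [hsplit] at *; exact eOpNorm_add_le _ _
    _ ≤ max (eOpNorm A) (eOpNorm B) + eOpNorm D := add_le_add hdiag hD'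

lemma prod_le (f : ι → Matrix m m ℝ) (M : ℝ) (hM1 : 1 ≤ M) (hM : ∀ i, eOpNorm (f i) ≤ M) :
    ∀ l : List ι, eOpNorm ((l.map f).prod) ≤ M ^ l.length := by
  intro l
  induction l with
  | nil =>
    simp only [List.map_nil, List.prod_nil, List.length_nil, pow_zero]
    exact eOpNorm_one_le
  | cons i l ih =>
    simp only [List.map_cons, List.prod_cons, List.length_cons]
    calc eOpNorm (f i * (l.map f).prod) ≤ eOpNorm (f i) * eOpNorm ((l.map f).prod) :=
          eOpNorm_mul _ _
      _ ≤ M * M ^ l.length :=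
          mul_le_mul (hM i) ih (eOpNorm_nonneg _) (zero_le_one.trans hM1)
      _ = M ^ (l.length + 1) := by ring

lemma mirF_bddAbove (f : ι → Matrix m m ℝ) (M : ℝ) (hM1 : 1 ≤ M) (hM : ∀ i, eOpNorm (f i) ≤ M)
    (k : ℕ) : BddAbove { x | ∃ l : List ι, l.length = k ∧ x = eOpNorm (l.map f).prod } := by
  refine ⟨M ^ k, fun x hx => ?_⟩
  obtain ⟨l, hl, rfl⟩ := hx
  rw [← hl]
  exact prod_le f M hM1 hM l

lemma mirF_mem_le (f : ι → Matrix m m ℝ) (M : ℝ) (hM1 : 1 ≤ M) (hM : ∀ i, eOpNorm (f i) ≤ M)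
    {k : ℕ} (l : List ι) (hl : l.length = k) : eOpNorm ((l.map f).prod) ≤ mirF f k :=
  le_csSup (mirF_bddAbove f M hM1 hM k) ⟨l, hl, rfl⟩

lemma mirF_nonneg [Nonempty ι] (f : ι → Matrix m m ℝ) (M : ℝ) (hM1 : 1 ≤ M)
    (hM : ∀ i, eOpNorm (f i) ≤ M) (k : ℕ) : 0 ≤ mirF f k :=
  (eOpNorm_nonneg _).trans
    (mirF_mem_le f M hM1 hM (List.replicate k (Classical.arbitrary ι)) (List.length_replicate))

lemma mirF_le [Nonempty ι] (f : ι → Matrix m m ℝ) {k : ℕ} {c : ℝ}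
    (h : ∀ l : List ι, l.length = k → eOpNorm ((l.map f).prod) ≤ c) : mirF f k ≤ c := by
  refine csSup_le ?_ ?_
  · exact ⟨eOpNorm (((List.replicate k (Classical.arbitrary ι)).map f)).prod,
      ⟨List.replicate k (Classical.arbitrary ι), List.length_replicate, rfl⟩⟩
  · rintro x ⟨l, hl, rfl⟩
    exact h l hl

end helpers

section blockE
variable {ι : Type*} {m n : Type*} [Fintype m] [Fintype n] [DecidableEq m] [DecidableEq n]
variable (fA : ι → Matrix m m ℝ) (fB : ι → Matrix n n ℝ) (fD : ι → Matrix m n ℝ)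

noncomputable def blockE : List ι → Matrix m n ℝ
  | [] => 0
  | i :: l => fA i * blockE l + fD i * ((l.map fB).prod)

lemma prodC_eq (l : List ι) :
    (l.map fun i => Matrix.fromBlocks (fA i) (fD i) 0 (fB i)).prod
      = Matrix.fromBlocks ((l.map fA).prod) (blockE fA fB fD l) 0 ((l.map fB).prod) := by
  induction l with
  | nil => simp [blockE, Matrix.fromBlocks_one]
  | cons i l ih =>
    simp only [List.map_cons, List.prod_cons, ih, Matrix.fromBlocks_multiply, blockE]
    simp

lemma blockE_eq (l : List ι) :
    blockE fA fB fD l = ∑ k : Fin l.length,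
      ((l.take k.val).map fA).prod * fD (l.get k) * ((l.drop (k.val + 1)).map fB).prod := by
  induction l with
  | nil => simp [blockE]
  | cons i l ih =>
    rw [show blockE fA fB fD (i :: l) = fA i * blockE fA fB fD l + fD i * ((l.map fB).prod)
      from rfl, ih]
    show _ = ∑ k : Fin (l.length + 1),
      ((List.take (k.val) (i :: l)).map fA).prod * fD ((i :: l).get (Fin.cast rfl k))
        * ((List.drop (k.val + 1) (i :: l)).map fB).prod
    rw [Fin.sum_univ_succ]
    simp only [List.take, List.drop, List.get, Fin.val_zero, Fin.val_succ, List.take_succ_cons,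
      List.drop_succ_cons, List.map_nil, List.prod_nil, one_mul, List.map_cons, List.prod_cons]
    simp only [one_mul, Matrix.one_mul, Matrix.mul_sum, Fin.eta]
    rw [add_comm]
    congr 1
    apply Finset.sum_congr rfl
    intro k _
    simp [Matrix.mul_assoc]

lemma blockE_bound [Nonempty ι] (MA MB K₀ : ℝ) (hMA1 : 1 ≤ MA) (hMB1 : 1 ≤ MB)
    (hMA : ∀ i, eOpNorm (fA i) ≤ MA) (hMB : ∀ i, eOpNorm (fB i) ≤ MB)
    (hK₀ : ∀ i, eOpNorm (fD i) ≤ K₀) (l : List ι) :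
    eOpNorm (blockE fA fB fD l)
      ≤ K₀ * ∑ k ∈ Finset.range l.length, mirF fA k * mirF fB (l.length - (k + 1)) := by
  have hK₀0 : 0 ≤ K₀ := (eOpNorm_nonneg _).trans (hK₀ (Classical.arbitrary ι))
  rw [blockE_eq]
  calc eOpNorm (∑ k : Fin l.length,
        ((l.take k.val).map fA).prod * fD (l.get k) * ((l.drop (k.val + 1)).map fB).prod)
      ≤ ∑ k : Fin l.length,
        eOpNorm (((l.take k.val).map fA).prod * fD (l.get k) * ((l.drop (k.val + 1)).map fB).prod) :=
        eOpNorm_sum_le _ _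
    _ ≤ ∑ k : Fin l.length, K₀ * (mirF fA k.val * mirF fB (l.length - (k.val + 1))) := by
        apply Finset.sum_le_sum
        intro k _
        have htA : eOpNorm ((l.take k.val).map fA).prod ≤ mirF fA k.val :=
          mirF_mem_le fA MA hMA1 hMA _ (by simp [List.length_take, Nat.min_eq_left (le_of_lt k.isLt)])
        have htB : eOpNorm ((l.drop (k.val + 1)).map fB).prod ≤ mirF fB (l.length - (k.val + 1)) :=
          mirF_mem_le fB MB hMB1 hMB _ (by simp [List.length_drop])
        have hAnn : 0 ≤ mirF fA k.val := mirF_nonneg fA MA hMA1 hMA _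
        have hBnn : 0 ≤ mirF fB (l.length - (k.val + 1)) := mirF_nonneg fB MB hMB1 hMB _
        calc eOpNorm (((l.take k.val).map fA).prod * fD (l.get k) * ((l.drop (k.val + 1)).map fB).prod)
            ≤ eOpNorm (((l.take k.val).map fA).prod * fD (l.get k))
              * eOpNorm ((l.drop (k.val + 1)).map fB).prod := eOpNorm_mul _ _
          _ ≤ (eOpNorm ((l.take k.val).map fA).prod * eOpNorm (fD (l.get k)))
              * eOpNorm ((l.drop (k.val + 1)).map fB).prod := by
              apply mul_le_mul_of_nonneg_right (eOpNorm_mul _ _) (eOpNorm_nonneg _)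
          _ ≤ (mirF fA k.val * K₀) * mirF fB (l.length - (k.val + 1)) := by
              apply mul_le_mul
              · exact mul_le_mul htA (hK₀ _) (eOpNorm_nonneg _) hAnn
              · exact htB
              · exact eOpNorm_nonneg _
              · exact mul_nonneg hAnn hK₀0
          _ = K₀ * (mirF fA k.val * mirF fB (l.length - (k.val + 1))) := by ring
    _ = K₀ * ∑ k ∈ Finset.range l.length, mirF fA k * mirF fB (l.length - (k + 1)) := by
        rw [← Finset.mul_sum, Fin.sum_univ_eq_sum_range
          (fun k => mirF fA k * mirF fB (l.length - (k + 1)))]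

end blockE

theorem stmt8 {ι : Type*} [Nonempty ι] {d₁ d₂ : ℕ} (hd₁ : 0 < d₁) (hd₂ : 0 < d₂)
    (fA : ι → Matrix (Fin d₁) (Fin d₁) ℝ) (fB : ι → Matrix (Fin d₂) (Fin d₂) ℝ)
    (fD : ι → Matrix (Fin d₁) (Fin d₂) ℝ)
    (hcA : IsCompact (Set.range fA)) (hcB : IsCompact (Set.range fB))
    (K₀ : ℝ) (hK₀ : ∀ i, eOpNorm (fD i) ≤ K₀) :
    ∀ n : ℕ, 1 ≤ n →
      max (mirF fA n) (mirF fB n) ≤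
        mirF (fun i => Matrix.fromBlocks (fA i) (fD i) 0 (fB i)) n ∧
      mirF (fun i => Matrix.fromBlocks (fA i) (fD i) 0 (fB i)) n ≤
        max (mirF fA n) (mirF fB n) +
          K₀ * ∑ k ∈ Finset.Icc 1 n, mirF fA (k - 1) * mirF fB (n - k) := by
  intro n hn
  have hK₀0 : 0 ≤ K₀ := (eOpNorm_nonneg _).trans (hK₀ (Classical.arbitrary ι))
  set fC := fun i => Matrix.fromBlocks (fA i) (fD i) 0 (fB i) with hfC
  -- uniform bounds from compactness
  have hcont : ∀ {a : ℕ}, Continuous fun A : Matrix (Fin a) (Fin a) ℝ => eOpNorm A := by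
    intro a
    have h1 := LinearMap.continuous_of_finiteDimensional
      ((Matrix.toEuclideanLin.trans LinearMap.toContinuousLinearMap :
        Matrix (Fin a) (Fin a) ℝ ≃ₗ[ℝ]
          (EuclideanSpace ℝ (Fin a) →L[ℝ] EuclideanSpace ℝ (Fin a))).toLinearMap)
    exact continuous_norm.comp h1
  have hbdd : ∀ {a : ℕ} (f : ι → Matrix (Fin a) (Fin a) ℝ), IsCompact (Set.range f) →
      ∃ M, ∀ i, eOpNorm (f i) ≤ M := by
    intro a f hc
    have := (hc.image hcont).bddAbove
    obtain ⟨M, hM⟩ := this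
    exact ⟨M, fun i => hM ⟨f i, ⟨i, rfl⟩, rfl⟩⟩
  obtain ⟨MA, hMA⟩ := hbdd fA hcA
  obtain ⟨MB, hMB⟩ := hbdd fB hcB
  set NA := max MA 1 with hNA
  set NB := max MB 1 with hNB
  have hNA1 : 1 ≤ NA := le_max_right _ _
  have hNB1 : 1 ≤ NB := le_max_right _ _
  have hNAb : ∀ i, eOpNorm (fA i) ≤ NA := fun i => (hMA i).trans (le_max_left _ _)
  have hNBb : ∀ i, eOpNorm (fB i) ≤ NB := fun i => (hMB i).trans (le_max_left _ _)
  set NC := max NA NB + K₀ with hNC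
  have hNC1 : 1 ≤ NC := by
    have : (1:ℝ) ≤ max NA NB := le_trans hNA1 (le_max_left _ _)
    linarith
  have hNCb : ∀ i, eOpNorm (fC i) ≤ NC := by
    intro i
    calc eOpNorm (fC i) ≤ max (eOpNorm (fA i)) (eOpNorm (fB i)) + eOpNorm (fD i) :=
          block_upper _ _ _
      _ ≤ max NA NB + K₀ :=
          add_le_add (max_le_max (hNAb i) (hNBb i)) (hK₀ i)
  constructor
  · apply max_le
    · apply mirF_le fA
      intro l hl
      calc eOpNorm ((l.map fA)).prod ≤ eOpNorm ((l.map fC)).prod := by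
            rw [prodC_eq]; exact le_blockA _ _ _
        _ ≤ mirF fC n := mirF_mem_le fC NC hNC1 hNCb l hl
    · apply mirF_le fB
      intro l hl
      calc eOpNorm ((l.map fB)).prod ≤ eOpNorm ((l.map fC)).prod := by
            rw [prodC_eq]; exact le_blockB _ _ _
        _ ≤ mirF fC n := mirF_mem_le fC NC hNC1 hNCb l hl
  · apply mirF_le fC
    intro l hl
    rw [prodC_eq]
    have h1 : eOpNorm (Matrix.fromBlocks ((l.map fA)).prod (blockE fA fB fD l) 0 ((l.map fB)).prod)
        ≤ max (eOpNorm ((l.map fA)).prod) (eOpNorm ((l.map fB)).prod) + eOpNorm (blockE fA fB fD l) :=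
      block_upper _ _ _
    have h2 : max (eOpNorm ((l.map fA)).prod) (eOpNorm ((l.map fB)).prod)
        ≤ max (mirF fA n) (mirF fB n) :=
      max_le_max (mirF_mem_le fA NA hNA1 hNAb l hl) (mirF_mem_le fB NB hNB1 hNBb l hl)
    have h3 := blockE_bound fA fB fD NA NB K₀ hNA1 hNB1 hNAb hNBb hK₀ l
    rw [hl] at h3
    have h4 : ∑ k ∈ Finset.Icc 1 n, mirF fA (k - 1) * mirF fB (n - k)
        = ∑ k ∈ Finset.range n, mirF fA k * mirF fB (n - (k + 1)) := by
      rw [show Finset.Icc 1 n = Finset.Ico 1 (n + 1) by rw [Finset.Ico_add_one_right_eq_Icc],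
        Finset.sum_Ico_eq_sum_range]
      simp only [Nat.add_sub_cancel]
      apply Finset.sum_congr rfl
      intro k _
      rw [show 1 + k - 1 = k from by omega, show n - (1 + k) = n - (k + 1) from by omega]
    rw [h4]
    linarith
end

section
/- Let A = {A₀,…,A_{m−1}} ⊂ M_d(R) with joint spectral radius 1, and let B₀, B₁ ∈ M_{md}(R) be the block cyclic permutation matrix and block diagonal matrix built from A as above. Suppose the marginal instability rate sequence (aₙ) of A is weakly increasing (there exists κ > 0 with a_{n+m} ≥ κ aₙ for all n, m ≥ 1) and weakly upper regularly varying (for every m ≥ 1 there is C_m > 0 with a_{nm} ≤ C_m aₙ for all n ≥ 1). Then the joint spectral radius of {B₀, B₁} equals 1, and the marginal instability rate sequence (bₙ) of {B₀, B₁} satisfies bₙ ≍ aₙ, i.e. there exist constants 0 < c ≤ C with c aₙ ≤ bₙ ≤ C aₙ for all n ≥ 1. -/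
open Filter Topology

/-- The maximal Euclidean operator norm over all products of `n` elements of `𝒜`. -/
noncomputable def mirS {m : Type*} [Fintype m] [DecidableEq m]
    (𝒜 : Set (Matrix m m ℝ)) (n : ℕ) : ℝ :=
  sSup { x | ∃ l : List (Matrix m m ℝ), l.length = n ∧ (∀ M ∈ l, M ∈ 𝒜) ∧ x = eOpNorm l.prod }

/-- The block cyclic permutation matrix: the `(i, j)` block (of size `d × d`) is the
identity iff `i = j + 1 (mod m)`, else `0`. -/
def B0 (m d : ℕ) [NeZero m] : Matrix (Fin m × Fin d) (Fin m × Fin d) ℝ :=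
  fun p q => if p.1 = q.1 + 1 ∧ p.2 = q.2 then 1 else 0

/-- The block diagonal matrix `diag (A 0, …, A (m-1))`. -/
def B1 {m d : ℕ} (A : Fin m → Matrix (Fin d) (Fin d) ℝ) :
    Matrix (Fin m × Fin d) (Fin m × Fin d) ℝ :=
  fun p q => if p.1 = q.1 then A p.1 p.2 q.2 else 0


open scoped Matrix.Norms.L2Operator Fin.NatCast Fin.CommRing

set_option linter.unusedSectionVars false

namespace StmtAux


lemma eOpNorm_eq {ι : Type*} [Fintype ι] [DecidableEq ι] (M : Matrix ι ι ℝ) :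
    eOpNorm M = ‖M‖ := rfl

lemma norm_one_le {ι : Type*} [Fintype ι] [DecidableEq ι] : ‖(1 : Matrix ι ι ℝ)‖ ≤ 1 := by
  rw [Matrix.cstar_norm_def, map_one]
  exact ContinuousLinearMap.norm_id_le

lemma norm_list_prod_le {ι : Type*} [Fintype ι] [DecidableEq ι] {R : ℝ} (h1 : 1 ≤ R) :
    ∀ l : List (Matrix ι ι ℝ), (∀ M ∈ l, ‖M‖ ≤ R) → ‖l.prod‖ ≤ R ^ l.length
  | [], _ => by
    simp only [List.prod_nil, List.length_nil, pow_zero]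
    exact norm_one_le
  | M :: t, h => by
    rw [List.prod_cons, List.length_cons]
    calc ‖M * t.prod‖ ≤ ‖M‖ * ‖t.prod‖ := norm_mul_le _ _
      _ ≤ R * R ^ t.length := by
          apply mul_le_mul (h M (by simp)) (norm_list_prod_le h1 t fun N hN => h N (by simp [hN]))
            (norm_nonneg _) (le_trans zero_le_one h1)
      _ = R ^ (t.length + 1) := by ring


variable {m d : ℕ} [NeZero m]



def bmat (A : Fin m → Matrix (Fin d) (Fin d) ℝ) (b : Bool) :
    Matrix (Fin m × Fin d) (Fin m × Fin d) ℝ := if b then B1 A else B0 m d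

def wordIdx : List Bool → Fin m → List (Fin m)
  | [], _ => []
  | false :: w, i => wordIdx w (i - 1)
  | true :: w, i => i :: wordIdx w i

lemma prod_bmat_apply (A : Fin m → Matrix (Fin d) (Fin d) ℝ) (w : List Bool) (i j : Fin m)
    (a b : Fin d) :
    ((w.map (bmat A)).prod) (i, a) (j, b) =
      if j = i - ((w.count false : ℕ) : Fin m) then (((wordIdx w i).map A).prod) a b else 0 := by
  induction w generalizing i a with
  | nil =>
    simp only [List.map_nil, List.prod_nil, wordIdx, List.count_nil, Nat.cast_zero, sub_zero]
    by_cases h : j = i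
    · subst h; simp [Matrix.one_apply, Prod.ext_iff]
    · simp [Matrix.one_apply, Prod.ext_iff, h, Ne.symm h]
  | cons b0 w ih =>
    rw [List.map_cons, List.prod_cons, Matrix.mul_apply, Fintype.sum_prod_type]
    cases b0 with
    | true =>
      have hb : bmat A true = B1 A := rfl
      have h1 : ∀ k c, (B1 A) (i,a) (k,c) = if k = i then A i a c else 0 := by
        intro k c; simp [B1, eq_comm]
      simp only [hb, h1, ite_mul, zero_mul, Finset.sum_ite_irrel, Finset.sum_const_zero,
        Finset.sum_ite_eq', Finset.mem_univ, if_true]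
      simp only [ih, mul_ite, mul_zero, Finset.sum_ite_irrel, Finset.sum_const_zero]
      have hc : (true :: w).count false = w.count false := by simp
      have hw : wordIdx (true :: w) i = i :: wordIdx w i := rfl
      rw [hc, hw, List.map_cons, List.prod_cons]
      by_cases h : j = i - ((w.count false : ℕ) : Fin m)
      · rw [if_pos h, if_pos h, Matrix.mul_apply]
      · rw [if_neg h, if_neg h]
    | false =>
      have hb : bmat A false = B0 m d := rfl
      have h1 : ∀ k c, (B0 m d) (i,a) (k,c) =
          if k = i - 1 then (if c = a then (1:ℝ) else 0) else 0 := by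
        intro k c
        by_cases hk : k = i - 1
        · subst hk
          have : i = (i - 1) + 1 := by ring
          by_cases hc : c = a
          · subst hc; simp [B0, ← this]
          · simp [B0, ← this, hc, Ne.symm hc]
        · have : ¬ (i = k + 1) := by
            intro h
            apply hk; rw [h]; ring
          simp [B0, this, hk]
      simp only [hb, h1, ite_mul, zero_mul, one_mul, Finset.sum_ite_irrel, Finset.sum_const_zero,
        Finset.sum_ite_eq', Finset.mem_univ, if_true]
      rw [ih]
      have hc : (false :: w).count false = w.count false + 1 := by simp
      have hw : wordIdx (false :: w) i = wordIdx w (i - 1) := rfl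
      have hsub : i - (((false :: w).count false : ℕ) : Fin m)
          = (i - 1) - ((w.count false : ℕ) : Fin m) := by
        rw [hc]; push_cast; ring
      rw [hw, hsub]




lemma sq_norm_euclid {ι : Type*} [Fintype ι] (y : EuclideanSpace ℝ ι) :
    ‖y‖ ^ 2 = ∑ i, y i ^ 2 := by
  rw [EuclideanSpace.norm_eq, Real.sq_sqrt (by positivity)]
  simp [Real.norm_eq_abs, sq_abs]

lemma norm_toEuclideanLin_le {ι : Type*} [Fintype ι] [DecidableEq ι] (M : Matrix ι ι ℝ)
    (x : EuclideanSpace ℝ ι) : ‖Matrix.toEuclideanLin M x‖ ≤ ‖M‖ * ‖x‖ :=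
  Matrix.l2_opNorm_mulVec M x

lemma le_of_sq_le_sq {P Q : ℝ} (h : P ^ 2 ≤ Q ^ 2) (hP : 0 ≤ P) (hQ : 0 ≤ Q) : P ≤ Q := by
  have := Real.sqrt_le_sqrt h
  rwa [Real.sqrt_sq hP, Real.sqrt_sq hQ] at this

lemma norm_blockShift_le (G : Matrix (Fin m × Fin d) (Fin m × Fin d) ℝ)
    (F : Fin m → Matrix (Fin d) (Fin d) ℝ) (σ : Fin m → Fin m) (hσ : Function.Injective σ)
    (hG : ∀ i a j b, G (i,a) (j,b) = if j = σ i then F i a b else 0)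
    {N : ℝ} (hN0 : 0 ≤ N) (hN : ∀ i, ‖F i‖ ≤ N) : ‖G‖ ≤ N := by
  rw [Matrix.l2_opNorm_def]
  apply ContinuousLinearMap.opNorm_le_bound _ hN0
  intro x
  show ‖Matrix.toEuclideanLin G x‖ ≤ N * ‖x‖
  set v : Fin m → EuclideanSpace ℝ (Fin d) :=
    fun j => (WithLp.equiv 2 _).symm (fun b => x (j, b)) with hv
  have hvc : ∀ j b, v j b = x (j, b) := fun j b => rfl
  have hGx : ∀ i a, (Matrix.toEuclideanLin G x) (i, a) =
      (Matrix.toEuclideanLin (F i) (v (σ i))) a := by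
    intro i a
    show (G.mulVec x) (i, a) = ((F i).mulVec (v (σ i))) a
    rw [Matrix.mulVec, dotProduct, Fintype.sum_prod_type]
    simp only [hG, ite_mul, zero_mul, Finset.sum_ite_irrel, Finset.sum_const_zero,
      Finset.sum_ite_eq', Finset.mem_univ, if_true]
    rfl
  have hsq : ‖Matrix.toEuclideanLin G x‖ ^ 2 ≤ (N * ‖x‖) ^ 2 := by
    rw [sq_norm_euclid, Fintype.sum_prod_type]
    have hterm : ∀ i, ∑ a, (Matrix.toEuclideanLin G x) (i, a) ^ 2 ≤ N ^ 2 * ‖v (σ i)‖ ^ 2 := by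
      intro i
      have h1 : ∑ a, (Matrix.toEuclideanLin G x) (i, a) ^ 2
          = ‖Matrix.toEuclideanLin (F i) (v (σ i))‖ ^ 2 := by
        rw [sq_norm_euclid]
        exact Finset.sum_congr rfl fun a _ => by rw [hGx i a]
      rw [h1]
      have h2 : ‖Matrix.toEuclideanLin (F i) (v (σ i))‖ ≤ N * ‖v (σ i)‖ :=
        le_trans (norm_toEuclideanLin_le _ _)
          (mul_le_mul_of_nonneg_right (hN i) (norm_nonneg _))
      calc ‖Matrix.toEuclideanLin (F i) (v (σ i))‖ ^ 2 ≤ (N * ‖v (σ i)‖) ^ 2 := by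
            apply pow_le_pow_left₀ (norm_nonneg _) h2
        _ = N ^ 2 * ‖v (σ i)‖ ^ 2 := by ring
    calc ∑ i, ∑ a, (Matrix.toEuclideanLin G x) (i, a) ^ 2
        ≤ ∑ i, N ^ 2 * ‖v (σ i)‖ ^ 2 := Finset.sum_le_sum (fun i _ => hterm i)
      _ = N ^ 2 * ∑ i, ‖v (σ i)‖ ^ 2 := by rw [Finset.mul_sum]
      _ ≤ N ^ 2 * ∑ j, ‖v j‖ ^ 2 := by
          apply mul_le_mul_of_nonneg_left _ (by positivity)
          have himg : ∑ j ∈ Finset.univ.image σ, ‖v j‖ ^ 2 = ∑ i, ‖v (σ i)‖ ^ 2 :=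
            Finset.sum_image (fun a _ b _ h => hσ h)
          rw [← himg]
          exact Finset.sum_le_sum_of_subset_of_nonneg (Finset.subset_univ _)
            (fun j _ _ => by positivity)
      _ = (N * ‖x‖) ^ 2 := by
          have hxx : ‖x‖ ^ 2 = ∑ j, ‖v j‖ ^ 2 := by
            rw [sq_norm_euclid x, Fintype.sum_prod_type]
            refine Finset.sum_congr rfl fun j _ => ?_
            rw [sq_norm_euclid (v j)]
            exact Finset.sum_congr rfl fun b _ => by rw [hvc]
          rw [mul_pow, hxx]
  exact le_of_sq_le_sq hsq (norm_nonneg _) (by positivity)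

lemma le_norm_blockShift (G : Matrix (Fin m × Fin d) (Fin m × Fin d) ℝ)
    (F : Fin m → Matrix (Fin d) (Fin d) ℝ) (σ : Fin m → Fin m)
    (hG : ∀ i a j b, G (i,a) (j,b) = if j = σ i then F i a b else 0)
    (i : Fin m) : ‖F i‖ ≤ ‖G‖ := by
  rw [Matrix.l2_opNorm_def (A := F i)]
  apply ContinuousLinearMap.opNorm_le_bound _ (norm_nonneg G)
  intro v
  show ‖Matrix.toEuclideanLin (F i) v‖ ≤ ‖G‖ * ‖v‖
  set x : EuclideanSpace ℝ (Fin m × Fin d) :=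
    (WithLp.equiv 2 _).symm (fun p => if p.1 = σ i then v p.2 else 0) with hx
  have hxc : ∀ j b, x (j, b) = if j = σ i then v b else 0 := fun j b => rfl
  have hxn : ‖x‖ = ‖v‖ := by
    apply le_antisymm <;> apply le_of_sq_le_sq _ (norm_nonneg _) (norm_nonneg _) <;>
      rw [sq_norm_euclid, sq_norm_euclid, Fintype.sum_prod_type]
    · apply le_of_eq
      simp only [hxc, apply_ite (fun t : ℝ => t ^ 2), zero_pow two_ne_zero,
        Finset.sum_ite_irrel, Finset.sum_const_zero, Finset.sum_ite_eq', Finset.mem_univ, if_true]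
    · apply le_of_eq
      simp only [hxc, apply_ite (fun t : ℝ => t ^ 2), zero_pow two_ne_zero,
        Finset.sum_ite_irrel, Finset.sum_const_zero, Finset.sum_ite_eq', Finset.mem_univ, if_true]
  have h2 : ∀ a, (Matrix.toEuclideanLin G x) (i, a) = (Matrix.toEuclideanLin (F i) v) a := by
    intro a
    show (G.mulVec x) (i, a) = ((F i).mulVec v) a
    rw [Matrix.mulVec, dotProduct, Fintype.sum_prod_type]
    simp only [hG, hxc, ite_mul, zero_mul, Finset.sum_ite_irrel, Finset.sum_const_zero,
      Finset.sum_ite_eq', Finset.mem_univ, if_true]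
    rfl
  have h3 : ‖Matrix.toEuclideanLin (F i) v‖ ^ 2 ≤ ‖Matrix.toEuclideanLin G x‖ ^ 2 := by
    rw [sq_norm_euclid, sq_norm_euclid, Fintype.sum_prod_type]
    have := Finset.single_le_sum
      (f := fun j => ∑ a, (Matrix.toEuclideanLin G x) (j, a) ^ 2)
      (fun j _ => by positivity) (Finset.mem_univ i)
    refine le_trans (le_of_eq ?_) this
    exact Finset.sum_congr rfl fun a _ => by rw [h2 a]
  calc ‖Matrix.toEuclideanLin (F i) v‖ ≤ ‖Matrix.toEuclideanLin G x‖ :=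
        le_of_sq_le_sq h3 (norm_nonneg _) (norm_nonneg _)
    _ ≤ ‖G‖ * ‖x‖ := norm_toEuclideanLin_le _ _
    _ = ‖G‖ * ‖v‖ := by rw [hxn]





lemma wordIdx_length (w : List Bool) (i : Fin m) : (wordIdx w i).length = w.count true := by
  induction w generalizing i with
  | nil => simp [wordIdx]
  | cons b w ih => cases b <;> simp [wordIdx, List.count_cons, ih]

lemma wordIdx_replicate (t : ℕ) (w : List Bool) (i : Fin m) :
    wordIdx (List.replicate t false ++ w) i = wordIdx w (i - (t : Fin m)) := by
  induction t generalizing i with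
  | zero => simp
  | succ t ih =>
    rw [List.replicate_succ, List.cons_append]
    show wordIdx (List.replicate t false ++ w) (i - 1) = _
    rw [ih]
    congr 1
    push_cast
    ring

def enc : List (Fin m) → List Bool
  | [] => []
  | [_] => [true]
  | i :: j :: rest => true :: (List.replicate ((i - j) : Fin m).val false ++ enc (j :: rest))

lemma enc_count : ∀ l : List (Fin m), (enc l).count true = l.length
  | [] => by simp [enc]
  | [i] => by simp [enc]
  | i :: j :: rest => by
    have ih := enc_count (j :: rest)
    simp only [enc, List.count_cons, List.count_append, List.count_replicate, ih]
    simp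

lemma enc_length : ∀ l : List (Fin m), l ≠ [] → (enc l).length + m ≤ l.length * m + 1
  | [i], _ => by simp [enc]; omega
  | i :: j :: rest, _ => by
    have ih := enc_length (j :: rest) (by simp)
    have he : ((i - j : Fin m)).val < m := (i - j).isLt
    simp only [enc, List.length_cons, List.length_append, List.length_replicate] at ih ⊢
    have : (rest.length + 1) * m + m = (rest.length + 1 + 1) * m := by ring
    omega

lemma wordIdx_enc : ∀ (h : Fin m) (t : List (Fin m)), wordIdx (enc (h :: t)) h = h :: t
  | h, [] => by simp [enc, wordIdx]
  | h, j :: rest => by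
    have ih := wordIdx_enc j rest
    show wordIdx (true :: (List.replicate ((h - j : Fin m)).val false ++ enc (j :: rest))) h = _
    rw [wordIdx, wordIdx_replicate, Fin.cast_val_eq_self, sub_sub_cancel, ih]


variable (A : Fin m → Matrix (Fin d) (Fin d) ℝ)



lemma bmat_mem (b : Bool) : bmat A b ∈ ({B0 m d, B1 A} : Set _) := by
  cases b <;> simp [bmat]

lemma norm_bmat_le (b : Bool) : ‖bmat A b‖ ≤ 1 + (‖B0 m d‖ + ‖B1 A‖) := by
  have h0 : (0:ℝ) ≤ ‖B0 m d‖ := norm_nonneg _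
  have h1 : (0:ℝ) ≤ ‖B1 A‖ := norm_nonneg _
  cases b <;> simp [bmat] <;> linarith

lemma le_mirS {n : ℕ} (w : List Bool) (hw : w.length = n) :
    ‖(w.map (bmat A)).prod‖ ≤ mirS ({B0 m d, B1 A} : Set _) n := by
  have h0 : (0:ℝ) ≤ ‖B0 m d‖ := norm_nonneg _
  have h1 : (0:ℝ) ≤ ‖B1 A‖ := norm_nonneg _
  have hR : (1:ℝ) ≤ 1 + (‖B0 m d‖ + ‖B1 A‖) := by linarith
  apply le_csSup
  · refine ⟨(1 + (‖B0 m d‖ + ‖B1 A‖)) ^ n, ?_⟩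
    rintro x ⟨l, hlen, hmem, rfl⟩
    rw [eOpNorm_eq, ← hlen]
    apply norm_list_prod_le hR l
    intro M hM
    have := hmem M hM
    simp only [Set.mem_insert_iff, Set.mem_singleton_iff] at this
    rcases this with rfl | rfl <;> linarith
  · exact ⟨w.map (bmat A), by simp [hw], fun M hM => by
      rcases List.mem_map.mp hM with ⟨b, _, rfl⟩; exact bmat_mem A b, (eOpNorm_eq _).symm⟩

lemma mirS_bddAbove (n : ℕ) : BddAbove
    { x | ∃ l : List (Matrix (Fin m × Fin d) (Fin m × Fin d) ℝ), l.length = n ∧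
      (∀ M ∈ l, M ∈ ({B0 m d, B1 A} : Set _)) ∧ x = eOpNorm l.prod } := by
  have h0 : (0:ℝ) ≤ ‖B0 m d‖ := norm_nonneg _
  have h1 : (0:ℝ) ≤ ‖B1 A‖ := norm_nonneg _
  have hR : (1:ℝ) ≤ 1 + (‖B0 m d‖ + ‖B1 A‖) := by linarith
  refine ⟨(1 + (‖B0 m d‖ + ‖B1 A‖)) ^ n, ?_⟩
  rintro x ⟨l, hlen, hmem, rfl⟩
  rw [eOpNorm_eq, ← hlen]
  apply norm_list_prod_le hR l
  intro M hM
  have := hmem M hM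
  simp only [Set.mem_insert_iff, Set.mem_singleton_iff] at this
  rcases this with rfl | rfl <;> linarith


lemma exists_word : ∀ l : List (Matrix (Fin m × Fin d) (Fin m × Fin d) ℝ),
    (∀ M ∈ l, M ∈ ({B0 m d, B1 A} : Set _)) →
    ∃ w : List Bool, w.length = l.length ∧ (w.map (bmat A)).prod = l.prod
  | [], _ => ⟨[], rfl, rfl⟩
  | M :: t, h => by
    obtain ⟨w, hw, hp⟩ := exists_word t (fun N hN => h N (by simp [hN]))
    have hM := h M (by simp)
    simp only [Set.mem_insert_iff, Set.mem_singleton_iff] at hM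
    rcases hM with rfl | rfl
    · exact ⟨false :: w, by simp [hw], by simp [List.prod_cons, hp, bmat]⟩
    · exact ⟨true :: w, by simp [hw], by simp [List.prod_cons, hp, bmat]⟩

lemma mirS_le {n : ℕ} {y : ℝ} (hy : 0 ≤ y)
    (h : ∀ w : List Bool, w.length = n → ‖(w.map (bmat A)).prod‖ ≤ y) :
    mirS ({B0 m d, B1 A} : Set _) n ≤ y := by
  apply Real.sSup_le _ hy
  rintro x ⟨l, hlen, hmem, rfl⟩
  obtain ⟨w, hw, hp⟩ := exists_word A l hmem
  rw [eOpNorm_eq, ← hp]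
  exact h w (hw.trans hlen)

lemma mirS_nonneg (n : ℕ) : 0 ≤ mirS ({B0 m d, B1 A} : Set _) n :=
  (norm_nonneg _).trans (le_mirS A (List.replicate n true) (by simp))

lemma le_mirF (l : List (Fin m)) : ‖(l.map A).prod‖ ≤ mirF A l.length := by
  have hR : (1:ℝ) ≤ 1 + ∑ i, ‖A i‖ := by
    have : (0:ℝ) ≤ ∑ i, ‖A i‖ := Finset.sum_nonneg fun i _ => norm_nonneg _
    linarith
  apply le_csSup
  · refine ⟨(1 + ∑ i, ‖A i‖) ^ l.length, ?_⟩
    rintro x ⟨l', hlen, rfl⟩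
    rw [eOpNorm_eq, ← hlen]
    have : l'.length = (l'.map A).length := (List.length_map _).symm
    rw [this]
    apply norm_list_prod_le hR
    intro M hM
    rcases List.mem_map.mp hM with ⟨i, _, rfl⟩
    have h1 : ‖A i‖ ≤ ∑ j, ‖A j‖ :=
      Finset.single_le_sum (fun j _ => norm_nonneg (A j)) (Finset.mem_univ i)
    linarith
  · exact ⟨l, rfl, (eOpNorm_eq _).symm⟩

lemma mirF_le {n : ℕ} {y : ℝ} (hy : 0 ≤ y)
    (h : ∀ l : List (Fin m), l.length = n → ‖(l.map A).prod‖ ≤ y) : mirF A n ≤ y := by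
  apply Real.sSup_le _ hy
  rintro x ⟨l, hlen, rfl⟩
  rw [eOpNorm_eq]
  exact h l hlen

lemma mirF_nonneg (n : ℕ) : 0 ≤ mirF A n := by
  have := le_mirF A (List.replicate n 0)
  simp only [List.length_replicate] at this
  exact (norm_nonneg _).trans this


end StmtAux

theorem stmt12 {d m : ℕ} [NeZero m] (A : Fin m → Matrix (Fin d) (Fin d) ℝ)
    (hjsr : Tendsto (fun n : ℕ => mirF A n ^ ((n : ℝ)⁻¹)) atTop (𝓝 1))
    (hwi : ∃ κ : ℝ, 0 < κ ∧ ∀ n k : ℕ, 1 ≤ n → 1 ≤ k → κ * mirF A n ≤ mirF A (n + k))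
    (hwur : ∀ k : ℕ, 1 ≤ k → ∃ Ck : ℝ, ∀ n : ℕ, 1 ≤ n → mirF A (n * k) ≤ Ck * mirF A n) :
    Tendsto (fun n : ℕ => mirS {B0 m d, B1 A} n ^ ((n : ℝ)⁻¹)) atTop (𝓝 1) ∧
    ∃ c C : ℝ, 0 < c ∧ c ≤ C ∧ ∀ n : ℕ, 1 ≤ n →
      c * mirF A n ≤ mirS {B0 m d, B1 A} n ∧ mirS {B0 m d, B1 A} n ≤ C * mirF A n := by
  classical
  obtain ⟨κ₀, hκ₀, hwi0⟩ := hwi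
  set κ : ℝ := min κ₀ 1 with hκdef
  have hκpos : 0 < κ := lt_min hκ₀ one_pos
  have hκle1 : κ ≤ 1 := min_le_right _ _
  have hκ : ∀ n k : ℕ, 1 ≤ n → 1 ≤ k → κ * mirF A n ≤ mirF A (n + k) := fun n k hn hk =>
    le_trans (mul_le_mul_of_nonneg_right (min_le_left _ _) (StmtAux.mirF_nonneg A n))
      (hwi0 n k hn hk)
  have hzero : ¬ (∀ n, 1 ≤ n → mirF A n = 0) := by
    intro h0
    have h2 : Tendsto (fun n : ℕ => mirF A n ^ ((n : ℝ)⁻¹)) atTop (𝓝 0) := by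
      apply Tendsto.congr' _ (tendsto_const_nhds (x := (0:ℝ)))
      filter_upwards [eventually_ge_atTop 1] with n hn
      rw [h0 n hn, Real.zero_rpow (inv_ne_zero (Nat.cast_ne_zero.mpr (by omega)))]
    exact one_ne_zero (tendsto_nhds_unique hjsr h2)
  have hm1 : 1 ≤ m := Nat.one_le_iff_ne_zero.mpr (NeZero.ne m)
  have hs1 : 0 < mirF A 1 := by
    rcases lt_or_eq_of_le (StmtAux.mirF_nonneg A 1) with h | h
    · exact h
    exfalso; apply hzero; intro n hn
    have hA0 : ∀ i, A i = 0 := by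
      intro i
      have h1 : ‖([i].map A).prod‖ ≤ mirF A 1 := by simpa using StmtAux.le_mirF A [i]
      simp only [List.map_cons, List.map_nil, List.prod_cons, List.prod_nil, mul_one] at h1
      rw [← h] at h1
      exact norm_eq_zero.mp (le_antisymm h1 (norm_nonneg _))
    refine le_antisymm (StmtAux.mirF_le A le_rfl ?_) (StmtAux.mirF_nonneg A n)
    intro l hl
    cases l with
    | nil => simp at hl; omega
    | cons i t => simp [List.prod_cons, hA0 i]
  have hposF : ∀ n, 1 ≤ n → 0 < mirF A n := by
    intro n hn
    rcases Nat.lt_or_ge n 2 with h2 | h2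
    · have hn1 : n = 1 := by omega
      rw [hn1]; exact hs1
    · have h3 := hκ 1 (n - 1) le_rfl (by omega)
      rw [show 1 + (n - 1) = n by omega] at h3
      calc (0:ℝ) < κ * mirF A 1 := mul_pos hκpos hs1
        _ ≤ mirF A n := h3
  have hκinv1 : 1 ≤ κ⁻¹ := by
    rw [le_inv_comm₀ one_pos hκpos]
    simpa using hκle1
  set C : ℝ := max κ⁻¹ (κ * mirF A 1)⁻¹ with hCdef
  have hCpos : 0 < C := lt_of_lt_of_le (by positivity) (le_max_left _ _)
  have hC1' : 1 ≤ C := le_trans hκinv1 (le_max_left _ _)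
  have hlb : ∀ n, 1 ≤ n → κ * mirF A 1 ≤ mirF A n := by
    intro n hn
    rcases Nat.lt_or_ge n 2 with h2 | h2
    · have hn1 : n = 1 := by omega
      rw [hn1]; nlinarith [hs1]
    · have h3 := hκ 1 (n - 1) le_rfl (by omega)
      rwa [show 1 + (n - 1) = n by omega] at h3
  have hone_le : ∀ n, 1 ≤ n → 1 ≤ C * mirF A n := by
    intro n hn
    have h2 := hlb n hn
    have h4 : 0 < κ * mirF A 1 := mul_pos hκpos hs1
    calc (1:ℝ) = (κ * mirF A 1)⁻¹ * (κ * mirF A 1) := (inv_mul_cancel₀ (ne_of_gt h4)).symm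
      _ ≤ C * mirF A n := mul_le_mul (le_max_right _ _) h2 (le_of_lt h4) (le_of_lt hCpos)
  have hCk : ∀ n k : ℕ, 1 ≤ n → k ≤ n → mirF A k ≤ C * mirF A n := by
    intro n k hn hkn
    rcases Nat.eq_or_lt_of_le hkn with rfl | hlt
    · nlinarith [StmtAux.mirF_nonneg A k]
    rcases Nat.eq_zero_or_pos k with rfl | hk1
    · have h5 : mirF A 0 ≤ 1 := by
        apply StmtAux.mirF_le A zero_le_one
        intro l hl
        rw [List.length_eq_zero_iff.mp hl]
        simpa using StmtAux.norm_one_le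
      exact h5.trans (hone_le n hn)
    · have h6 := hκ k (n - k) hk1 (by omega)
      rw [show k + (n - k) = n by omega] at h6
      have h5 : mirF A k ≤ κ⁻¹ * mirF A n := (le_inv_mul_iff₀ hκpos).mpr h6
      exact h5.trans (mul_le_mul_of_nonneg_right (le_max_left _ _) (le_of_lt (hposF n hn)))
  have hupper : ∀ n, 1 ≤ n → mirS ({B0 m d, B1 A} : Set _) n ≤ C * mirF A n := by
    intro n hn
    apply StmtAux.mirS_le A (mul_nonneg (le_of_lt hCpos) (StmtAux.mirF_nonneg A n))
    intro w hw
    refine StmtAux.norm_blockShift_le _ (fun i => ((StmtAux.wordIdx w i).map A).prod)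
      (fun i => i - ((w.count false : ℕ) : Fin m)) ?_ ?_
      (mul_nonneg (le_of_lt hCpos) (StmtAux.mirF_nonneg A n)) ?_
    · intro x y hxy
      have h7 := congrArg (· + ((w.count false : ℕ) : Fin m)) hxy
      simpa using h7
    · intro i a j b
      exact StmtAux.prod_bmat_apply A w i j a b
    · intro i
      rcases Nat.eq_zero_or_pos (w.count true) with hk | hk
      · have h8 : StmtAux.wordIdx w i = [] :=
          List.length_eq_zero_iff.mp (by rw [StmtAux.wordIdx_length]; exact hk)
        simp only [h8, List.map_nil, List.prod_nil]
        exact StmtAux.norm_one_le.trans (hone_le n hn)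
      · have h6 := StmtAux.le_mirF A (StmtAux.wordIdx w i)
        rw [StmtAux.wordIdx_length] at h6
        refine h6.trans (hCk n (w.count true) hn ?_)
        rw [← hw]
        exact List.count_le_length
  obtain ⟨Cm, hCm⟩ := hwur m hm1
  have hCm0 : 0 < Cm := by
    have h7 := hCm 1 le_rfl
    rw [one_mul] at h7
    have h8 := hposF m hm1
    nlinarith [hs1]
  have hD : 0 < κ⁻¹ * Cm := by positivity
  have hlower : ∀ n, 1 ≤ n →
      (κ⁻¹ * Cm)⁻¹ * mirF A n ≤ mirS ({B0 m d, B1 A} : Set _) n := by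
    intro n hn
    have hm0 : 0 < m := by omega
    have h8 := Nat.div_add_mod (n + m - 1) m
    have h9 : (n + m - 1) % m < m := Nat.mod_lt _ hm0
    set q := (n + m - 1) / m with hqdef
    have hq0 : 1 ≤ q := by
      rcases Nat.eq_zero_or_pos q with hq | hq
      · exfalso; rw [hq, Nat.mul_zero] at h8; omega
      · exact hq
    have hcomm : q * m = m * q := Nat.mul_comm _ _
    obtain ⟨t, ht⟩ : ∃ t, m * q = t := ⟨_, rfl⟩
    rw [ht] at h8
    have hn_le : n ≤ q * m := by rw [hcomm, ht]; omega
    have hqm_le : q * m ≤ n + m - 1 := by rw [hcomm, ht]; omega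
    have hstep1 : mirF A q ≤ mirS ({B0 m d, B1 A} : Set _) n := by
      apply StmtAux.mirF_le A (StmtAux.mirS_nonneg A n)
      intro l hl
      cases l with
      | nil => simp at hl; omega
      | cons h tl =>
        have hlen9 := StmtAux.enc_length (h :: tl) (by simp)
        rw [hl] at hlen9
        have hel : (StmtAux.enc (h :: tl)).length ≤ n := by omega
        set w := List.replicate (n - (StmtAux.enc (h :: tl)).length) false
          ++ StmtAux.enc (h :: tl) with hwdef
        have hwlen : w.length = n := by
          rw [hwdef]; simp only [List.length_append, List.length_replicate]; omega
        have hidx : StmtAux.wordIdx w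
            (h + ((n - (StmtAux.enc (h :: tl)).length : ℕ) : Fin m)) = h :: tl := by
          rw [hwdef, StmtAux.wordIdx_replicate, add_sub_cancel_right, StmtAux.wordIdx_enc]
        calc ‖((h :: tl).map A).prod‖
            = ‖((StmtAux.wordIdx w
                (h + ((n - (StmtAux.enc (h :: tl)).length : ℕ) : Fin m))).map A).prod‖ := by
              rw [hidx]
          _ ≤ ‖(w.map (StmtAux.bmat A)).prod‖ :=
              StmtAux.le_norm_blockShift _ _
                (fun i => i - ((w.count false : ℕ) : Fin m))
                (fun i a j b => StmtAux.prod_bmat_apply A w i j a b) _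
          _ ≤ mirS ({B0 m d, B1 A} : Set _) n := StmtAux.le_mirS A w hwlen
    have hstep2 := hCm q hq0
    have hstep3 : mirF A n ≤ κ⁻¹ * mirF A (q * m) := by
      rcases Nat.eq_or_lt_of_le hn_le with heq | hlt
      · rw [← heq]
        nlinarith [StmtAux.mirF_nonneg A n]
      · have h10 := hκ n (q * m - n) hn (by omega)
        rw [show n + (q * m - n) = q * m by omega] at h10
        exact (le_inv_mul_iff₀ hκpos).mpr h10
    have hcomb : mirF A n ≤ (κ⁻¹ * Cm) * mirS ({B0 m d, B1 A} : Set _) n := by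
      calc mirF A n ≤ κ⁻¹ * mirF A (q * m) := hstep3
        _ ≤ κ⁻¹ * (Cm * mirF A q) :=
            mul_le_mul_of_nonneg_left hstep2 (by positivity)
        _ ≤ κ⁻¹ * (Cm * mirS ({B0 m d, B1 A} : Set _) n) :=
            mul_le_mul_of_nonneg_left
              (mul_le_mul_of_nonneg_left hstep1 (le_of_lt hCm0)) (by positivity)
        _ = (κ⁻¹ * Cm) * mirS ({B0 m d, B1 A} : Set _) n := by ring
    calc (κ⁻¹ * Cm)⁻¹ * mirF A n
        ≤ (κ⁻¹ * Cm)⁻¹ * ((κ⁻¹ * Cm) * mirS ({B0 m d, B1 A} : Set _) n) :=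
          mul_le_mul_of_nonneg_left hcomb (by positivity)
      _ = mirS ({B0 m d, B1 A} : Set _) n := inv_mul_cancel_left₀ (ne_of_gt hD) _
  set c : ℝ := min ((κ⁻¹ * Cm)⁻¹) C with hcdef
  set C' : ℝ := max C ((κ⁻¹ * Cm)⁻¹) with hC'def
  have hc0 : 0 < c := lt_min (by positivity) hCpos
  have hC'0 : 0 < C' := lt_of_lt_of_le hCpos (le_max_left _ _)
  have hcC : c ≤ C' := le_trans (min_le_right _ _) (le_max_left _ _)
  have part2 : ∀ n : ℕ, 1 ≤ n →
      c * mirF A n ≤ mirS ({B0 m d, B1 A} : Set _) n ∧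
      mirS ({B0 m d, B1 A} : Set _) n ≤ C' * mirF A n := by
    intro n hn
    constructor
    · calc c * mirF A n ≤ (κ⁻¹ * Cm)⁻¹ * mirF A n :=
            mul_le_mul_of_nonneg_right (min_le_left _ _) (StmtAux.mirF_nonneg A n)
        _ ≤ _ := hlower n hn
    · calc mirS ({B0 m d, B1 A} : Set _) n ≤ C * mirF A n := hupper n hn
        _ ≤ C' * mirF A n :=
            mul_le_mul_of_nonneg_right (le_max_left _ _) (StmtAux.mirF_nonneg A n)
  refine ⟨?_, c, C', hc0, hcC, part2⟩
  have hexp : Tendsto (fun n : ℕ => ((n : ℝ))⁻¹) atTop (𝓝 0) :=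
    tendsto_inv_atTop_zero.comp tendsto_natCast_atTop_atTop
  have hconst : ∀ {b : ℝ}, 0 < b → Tendsto (fun n : ℕ => b ^ ((n : ℝ)⁻¹)) atTop (𝓝 1) := by
    intro b hb
    have hca : ContinuousAt (fun e : ℝ => b ^ e) 0 := Real.continuousAt_const_rpow (ne_of_gt hb)
    have h11 := hca.tendsto.comp hexp
    simpa [Function.comp_def, Real.rpow_zero] using h11
  have hl := ((hconst hc0).mul hjsr)
  have hu := ((hconst hC'0).mul hjsr)
  rw [mul_one] at hl hu
  apply tendsto_of_tendsto_of_tendsto_of_le_of_le' hl hu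
  · filter_upwards [eventually_ge_atTop 1] with n hn
    rw [← Real.mul_rpow hc0.le (StmtAux.mirF_nonneg A n)]
    exact Real.rpow_le_rpow (mul_nonneg hc0.le (StmtAux.mirF_nonneg A n))
      (part2 n hn).1 (by positivity)
  · filter_upwards [eventually_ge_atTop 1] with n hn
    rw [← Real.mul_rpow hC'0.le (StmtAux.mirF_nonneg A n)]
    exact Real.rpow_le_rpow (StmtAux.mirS_nonneg A n) (part2 n hn).2 (by positivity)
end

section
/- Let A ⊂ M_d(R) be compact and nonempty with joint spectral radius 1, and let (aₙ) be its marginal instability rate sequence with respect to some norm on M_d(R). Then there exists κ > 0 such that a_{n+1} ≥ κ aₙ for every n ≥ 1. -/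
open Filter Topology

set_option synthInstance.maxHeartbeats 1000000
set_option maxHeartbeats 1000000

namespace Stmt14

variable {E : Type} [NormedAddCommGroup E] [NormedSpace ℝ E]

/-- Norms of length-`n` products. -/
def PSet (S : Set (E →L[ℝ] E)) (n : ℕ) : Set ℝ :=
  { x | ∃ l : List (E →L[ℝ] E), l.length = n ∧ (∀ f ∈ l, f ∈ S) ∧ x = ‖l.prod‖ }

noncomputable def bS (S : Set (E →L[ℝ] E)) (n : ℕ) : ℝ := sSup (PSet S n)

lemma prod_norm_le {S : Set (E →L[ℝ] E)} {C : ℝ} (hC : 1 ≤ C) (hSC : ∀ f ∈ S, ‖f‖ ≤ C) :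
    ∀ l : List (E →L[ℝ] E), (∀ f ∈ l, f ∈ S) → ‖l.prod‖ ≤ C ^ l.length := by
  intro l
  induction l with
  | nil => intro _; simp only [List.prod_nil, List.length_nil, pow_zero]; exact ContinuousLinearMap.norm_id_le
  | cons f t ih =>
    intro h
    have h1 : ‖f‖ ≤ C := hSC f (h f (by simp))
    have h2 := ih (fun g hg => h g (by simp [hg]))
    calc ‖(f :: t).prod‖ = ‖f * t.prod‖ := by rw [List.prod_cons]
      _ ≤ ‖f‖ * ‖t.prod‖ := norm_mul_le _ _
      _ ≤ C * C ^ t.length :=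
          mul_le_mul h1 h2 (norm_nonneg _) (le_trans zero_le_one hC)
      _ = C ^ (f :: t).length := by rw [List.length_cons, pow_succ]; ring

lemma PSet_nonempty {S : Set (E →L[ℝ] E)} (hne : S.Nonempty) (n : ℕ) : (PSet S n).Nonempty := by
  obtain ⟨f, hf⟩ := hne
  exact ⟨‖(List.replicate n f).prod‖, List.replicate n f, List.length_replicate,
    fun g hg => by rw [List.eq_of_mem_replicate hg]; exact hf, rfl⟩

lemma PSet_nonneg {S : Set (E →L[ℝ] E)} {n : ℕ} : ∀ x ∈ PSet S n, 0 ≤ x := by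
  rintro x ⟨l, _, _, rfl⟩; exact norm_nonneg _

lemma PSet_bddAbove {S : Set (E →L[ℝ] E)} {C : ℝ} (hC : 1 ≤ C) (hSC : ∀ f ∈ S, ‖f‖ ≤ C)
    (n : ℕ) : BddAbove (PSet S n) := by
  refine ⟨C ^ n, ?_⟩
  rintro x ⟨l, hlen, hmem, rfl⟩
  rw [← hlen]
  exact prod_norm_le hC hSC l hmem

lemma bS_nonneg (S : Set (E →L[ℝ] E)) (n : ℕ) : 0 ≤ bS S n :=
  Real.sSup_nonneg PSet_nonneg

lemma le_bS {S : Set (E →L[ℝ] E)} {C : ℝ} (hC : 1 ≤ C) (hSC : ∀ f ∈ S, ‖f‖ ≤ C)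
    {n : ℕ} {l : List (E →L[ℝ] E)} (hlen : l.length = n) (hmem : ∀ f ∈ l, f ∈ S) :
    ‖l.prod‖ ≤ bS S n :=
  le_csSup (PSet_bddAbove hC hSC n) ⟨l, hlen, hmem, rfl⟩

lemma bS_le {S : Set (E →L[ℝ] E)} (hne : S.Nonempty) {n : ℕ} {y : ℝ}
    (h : ∀ x ∈ PSet S n, x ≤ y) : bS S n ≤ y :=
  csSup_le (PSet_nonempty hne n) h

/-- The span of the union of all ranges. -/
def VSp (S : Set (E →L[ℝ] E)) : Submodule ℝ E :=
  Submodule.span ℝ (⋃ f ∈ S, Set.range (⇑f))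

lemma mem_VSp {S : Set (E →L[ℝ] E)} {f : E →L[ℝ] E} (hf : f ∈ S) (x : E) : f x ∈ VSp S :=
  Submodule.subset_span (Set.mem_iUnion₂.2 ⟨f, hf, Set.mem_range_self x⟩)

/-- Key lemma: products of length `n` applied to vectors of `VSp S` are controlled by
`bS S (n+1)`. -/
lemma star [FiniteDimensional ℝ E] (S : Set (E →L[ℝ] E)) {C : ℝ} (hC : 1 ≤ C)
    (hSC : ∀ f ∈ S, ‖f‖ ≤ C) :
    ∃ K : ℝ, 1 ≤ K ∧ ∀ (n : ℕ) (l : List (E →L[ℝ] E)), l.length = n → (∀ f ∈ l, f ∈ S) →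
      ∀ w ∈ VSp S, ‖l.prod w‖ ≤ K * bS S (n + 1) * ‖w‖ := by
  classical
  set s : Set E := ⋃ f ∈ S, Set.range (⇑f) with hs
  obtain ⟨t, hts, hspan, hind⟩ := exists_linearIndependent ℝ s
  haveI : Fintype t := hind.setFinite.fintype
  -- basis of VSp S indexed by t
  have hspan' : Submodule.span ℝ (Set.range ((↑) : t → E)) = VSp S := by
    rw [Subtype.range_coe]; exact hspan
  let B : Module.Basis t ℝ (VSp S) := (Module.Basis.span hind).map (LinearEquiv.ofEq _ _ hspan')
  have hB : ∀ i : t, (B i : E) = (i : E) := by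
    intro i
    show ((LinearEquiv.ofEq _ _ hspan' (Module.Basis.span hind i)) : E) = (i : E)
    rw [show ((LinearEquiv.ofEq _ _ hspan' (Module.Basis.span hind i)) : E)
        = ((Module.Basis.span hind i : _) : E) from rfl]
    simp [Module.Basis.span_apply]
  -- choose f i ∈ S and y i with f i (y i) = i
  have hex : ∀ i : t, ∃ f : E →L[ℝ] E, f ∈ S ∧ ∃ y : E, f y = (i : E) := by
    intro i
    have : (i : E) ∈ s := hts i.2
    rw [hs] at this
    obtain ⟨f, hf, y, hy⟩ := Set.mem_iUnion₂.1 this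
    exact ⟨f, hf, y, hy⟩
  choose F hFS y hFy using hex
  -- coordinate functionals are bounded
  let coordC : t → ℝ := fun i => ‖LinearMap.toContinuousLinearMap (B.coord i)‖
  have hcoord : ∀ (i : t) (v : VSp S), |B.repr v i| ≤ coordC i * ‖v‖ := by
    intro i v
    have := (LinearMap.toContinuousLinearMap (B.coord i)).le_opNorm v
    simpa [coordC, Real.norm_eq_abs, Module.Basis.coord_apply] using this
  have hsum_nonneg : 0 ≤ ∑ i, coordC i * ‖y i‖ :=
    Finset.sum_nonneg fun i _ => mul_nonneg (norm_nonneg (LinearMap.toContinuousLinearMap (B.coord i))) (norm_nonneg _)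
  refine ⟨(∑ i, coordC i * ‖y i‖) + 1, by linarith, ?_⟩
  intro n l hlen hmem w hw
  set v : VSp S := ⟨w, hw⟩ with hv
  have hbSnn : 0 ≤ bS S (n + 1) := bS_nonneg S (n + 1)
  have hwv : w = ∑ i, B.repr v i • (B i : E) := by
    have h1 : (v : E) = ((∑ i, B.repr v i • B i : VSp S) : E) := by rw [B.sum_repr v]
    rw [Submodule.coe_sum] at h1; simpa only [Submodule.coe_smul] using h1
  have hterm : ∀ i : t, ‖B.repr v i • l.prod (B i : E)‖
      ≤ (coordC i * ‖y i‖) * (bS S (n + 1) * ‖w‖) := by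
    intro i
    have hmem' : ∀ f ∈ l ++ [F i], f ∈ S := by
      intro f hf
      rcases List.mem_append.1 hf with h | h
      · exact hmem f h
      · rw [List.mem_singleton.1 h]; exact hFS i
    have hlen' : (l ++ [F i]).length = n + 1 := by simp [hlen]
    have hprodle : ‖l.prod * F i‖ ≤ bS S (n + 1) := by
      have := le_bS hC hSC hlen' hmem'
      rwa [List.prod_append, List.prod_singleton] at this
    have h2 : ‖l.prod (B i : E)‖ ≤ bS S (n + 1) * ‖y i‖ := by
      rw [hB i, ← hFy i, show l.prod ((F i) (y i)) = (l.prod * F i) (y i) from rfl]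
      calc ‖(l.prod * F i) (y i)‖ ≤ ‖l.prod * F i‖ * ‖y i‖ :=
            ContinuousLinearMap.le_opNorm _ _
        _ ≤ bS S (n + 1) * ‖y i‖ := by
            apply mul_le_mul_of_nonneg_right hprodle (norm_nonneg _)
    have h3 : |B.repr v i| ≤ coordC i * ‖w‖ := by
      have := hcoord i v
      rwa [show ‖v‖ = ‖w‖ from rfl] at this
    calc ‖B.repr v i • l.prod (B i : E)‖ = |B.repr v i| * ‖l.prod (B i : E)‖ := by
          rw [norm_smul, Real.norm_eq_abs]
      _ ≤ (coordC i * ‖w‖) * (bS S (n + 1) * ‖y i‖) := by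
          apply mul_le_mul h3 h2 (norm_nonneg _)
          positivity
      _ = (coordC i * ‖y i‖) * (bS S (n + 1) * ‖w‖) := by ring
  calc ‖l.prod w‖ = ‖∑ i, B.repr v i • l.prod (B i : E)‖ := by
        rw [hwv, map_sum]
        congr 1
        apply Finset.sum_congr rfl
        intro i _
        rw [map_smul]
    _ ≤ ∑ i, ‖B.repr v i • l.prod (B i : E)‖ := norm_sum_le _ _
    _ ≤ ∑ i, (coordC i * ‖y i‖) * (bS S (n + 1) * ‖w‖) :=
        Finset.sum_le_sum fun i _ => hterm i
    _ = (∑ i, coordC i * ‖y i‖) * (bS S (n + 1) * ‖w‖) := by rw [Finset.sum_mul]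
    _ ≤ ((∑ i, coordC i * ‖y i‖) + 1) * (bS S (n + 1) * ‖w‖) := by
        apply mul_le_mul_of_nonneg_right _ (by positivity)
        linarith
    _ = ((∑ i, coordC i * ‖y i‖) + 1) * bS S (n + 1) * ‖w‖ := by ring

lemma main : ∀ (D : ℕ) (E : Type) [NormedAddCommGroup E] [NormedSpace ℝ E]
    [FiniteDimensional ℝ E] (S : Set (E →L[ℝ] E)) (C : ℝ), Module.finrank ℝ E = D → 1 ≤ C →
    (∀ f ∈ S, ‖f‖ ≤ C) → S.Nonempty → (∀ n, 1 ≤ n → 0 < bS S n) →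
    ∃ κ, 0 < κ ∧ ∀ n, 1 ≤ n → κ * bS S n ≤ bS S (n + 1) := by
  intro D
  induction D using Nat.strong_induction_on with
  | _ D IH =>
  intro E _ _ _ S C hrank hC hSC hne hpos
  obtain ⟨K, hK1, hKstar⟩ := star S hC hSC
  have hK0 : 0 < K := lt_of_lt_of_le one_pos hK1
  have hC0 : 0 < C := lt_of_lt_of_le one_pos hC
  by_cases htop : VSp S = ⊤
  · refine ⟨K⁻¹, by positivity, ?_⟩
    intro n hn
    have hbound : bS S n ≤ K * bS S (n + 1) := by
      apply bS_le hne
      rintro x ⟨l, hlen, hmem, rfl⟩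
      apply ContinuousLinearMap.opNorm_le_bound _ (mul_nonneg (le_of_lt hK0) (bS_nonneg S _))
      intro w
      exact hKstar n l hlen hmem w (by rw [htop]; exact Submodule.mem_top)
    rw [inv_mul_le_iff₀ hK0]; exact hbound
  · set V := VSp S with hVdef
    have hVlt : Module.finrank ℝ ↥V < D := by
      rw [← hrank]; exact Submodule.finrank_lt htop
    set S' : Set (↥V →L[ℝ] ↥V) := { g | ∃ f ∈ S, ∀ v : ↥V, (g v : E) = f (v : E) } with hS'def
    have hrestrict : ∀ f ∈ S, ∃ g ∈ S', ∀ v : ↥V, (g v : E) = f (v : E) := by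
      intro f hf
      refine ⟨LinearMap.toContinuousLinearMap
        ((f : E →ₗ[ℝ] E).restrict (p := V) (q := V) (fun x _ => mem_VSp hf x)),
        ⟨f, hf, ?_⟩, ?_⟩ <;>
      · intro v; simp [LinearMap.restrict_apply]
    have hup_list : ∀ l : List (E →L[ℝ] E), (∀ f ∈ l, f ∈ S) →
        ∃ l' : List (↥V →L[ℝ] ↥V), l'.length = l.length ∧ (∀ g ∈ l', g ∈ S') ∧
          ∀ v : ↥V, ((l'.prod) v : E) = l.prod (v : E) := by
      intro l
      induction l with
      | nil => intro _; exact ⟨[], rfl, by simp, fun v => by simp⟩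
      | cons f tl ih =>
        intro h
        obtain ⟨l', hlen', hmem', hrel'⟩ := ih (fun g hg => h g (List.mem_cons_of_mem f hg))
        obtain ⟨g, hgS', hgrel⟩ := hrestrict f (h f List.mem_cons_self)
        refine ⟨g :: l', by simp [hlen'], ?_, ?_⟩
        · intro g' hg'
          rcases List.mem_cons.1 hg' with h1 | h1
          · rw [h1]; exact hgS'
          · exact hmem' g' h1
        · intro v
          rw [List.prod_cons, List.prod_cons, ContinuousLinearMap.mul_apply,
            ContinuousLinearMap.mul_apply, hgrel, hrel']
    have hdown_list : ∀ l' : List (↥V →L[ℝ] ↥V), (∀ g ∈ l', g ∈ S') →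
        ∃ l : List (E →L[ℝ] E), l.length = l'.length ∧ (∀ f ∈ l, f ∈ S) ∧
          ∀ v : ↥V, ((l'.prod) v : E) = l.prod (v : E) := by
      intro l'
      induction l' with
      | nil => intro _; exact ⟨[], rfl, by simp, fun v => by simp⟩
      | cons g tl ih =>
        intro h
        obtain ⟨l, hlen, hmem, hrel⟩ := ih (fun g' hg' => h g' (List.mem_cons_of_mem g hg'))
        obtain ⟨f, hfS, hgrel⟩ := h g List.mem_cons_self
        refine ⟨f :: l, by simp [hlen], ?_, ?_⟩
        · intro f' hf'
          rcases List.mem_cons.1 hf' with h1 | h1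
          · rw [h1]; exact hfS
          · exact hmem f' h1
        · intro v
          rw [List.prod_cons, List.prod_cons, ContinuousLinearMap.mul_apply,
            ContinuousLinearMap.mul_apply, hgrel, hrel]
    have hS'C : ∀ g ∈ S', ‖g‖ ≤ C := by
      rintro g ⟨f, hfS, hrel⟩
      apply ContinuousLinearMap.opNorm_le_bound _ (le_of_lt hC0)
      intro v
      rw [show ‖g v‖ = ‖(g v : E)‖ from rfl, hrel v]
      calc ‖f (v : E)‖ ≤ ‖f‖ * ‖(v : E)‖ := f.le_opNorm _
        _ ≤ C * ‖v‖ := by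
            rw [show ‖(v : E)‖ = ‖v‖ from rfl]
            exact mul_le_mul_of_nonneg_right (hSC f hfS) (norm_nonneg _)
    have hS'ne : S'.Nonempty := by
      obtain ⟨f, hf⟩ := hne
      obtain ⟨g, hg, _⟩ := hrestrict f hf
      exact ⟨g, hg⟩
    have hdown : ∀ n : ℕ, bS S (n + 1) ≤ C * bS S' n := by
      intro n
      apply bS_le hne
      rintro x ⟨l, hlen, hmem, rfl⟩
      rcases List.eq_nil_or_concat l with h0 | ⟨l₁, f, hcat⟩
      · rw [h0] at hlen; simp at hlen
      · subst hcat
        have hlen₁ : l₁.length = n := by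
          rw [List.concat_eq_append, List.length_append] at hlen; simpa using hlen
        have hfS : f ∈ S := hmem f (by simp)
        have hmem₁ : ∀ f' ∈ l₁, f' ∈ S := fun f' hf' => hmem f' (by simp [hf'])
        obtain ⟨l', hlen', hmem', hrel'⟩ := hup_list l₁ hmem₁
        have hprod : (l₁.concat f).prod = l₁.prod * f := by
          rw [List.concat_eq_append, List.prod_append, List.prod_singleton]
        rw [hprod]
        apply ContinuousLinearMap.opNorm_le_bound _
          (mul_nonneg (le_of_lt hC0) (bS_nonneg _ _))
        intro x
        rw [ContinuousLinearMap.mul_apply]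
        have hfx : f x ∈ V := mem_VSp hfS x
        have heq : l₁.prod (f x) = ((l'.prod ⟨f x, hfx⟩ : ↥V) : E) := (hrel' ⟨f x, hfx⟩).symm
        rw [heq]
        have hl'norm : ‖l'.prod‖ ≤ bS S' n := le_bS hC hS'C (hlen'.trans hlen₁) hmem'
        calc ‖((l'.prod ⟨f x, hfx⟩ : ↥V) : E)‖ = ‖l'.prod ⟨f x, hfx⟩‖ := rfl
          _ ≤ ‖l'.prod‖ * ‖(⟨f x, hfx⟩ : ↥V)‖ := (l'.prod).le_opNorm _
          _ = ‖l'.prod‖ * ‖f x‖ := rfl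
          _ ≤ bS S' n * (C * ‖x‖) := by
              apply mul_le_mul hl'norm ?_ (norm_nonneg _) (bS_nonneg _ _)
              calc ‖f x‖ ≤ ‖f‖ * ‖x‖ := f.le_opNorm x
                _ ≤ C * ‖x‖ := mul_le_mul_of_nonneg_right (hSC f hfS) (norm_nonneg _)
          _ = C * bS S' n * ‖x‖ := by ring
    have hupS' : ∀ n : ℕ, bS S' n ≤ K * bS S (n + 1) := by
      intro n
      apply bS_le hS'ne
      rintro x ⟨l', hlen', hmem', rfl⟩
      obtain ⟨l, hlen, hmem, hrel⟩ := hdown_list l' hmem'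
      apply ContinuousLinearMap.opNorm_le_bound _
        (mul_nonneg (le_of_lt hK0) (bS_nonneg _ _))
      intro v
      rw [show ‖l'.prod v‖ = ‖((l'.prod v : ↥V) : E)‖ from rfl, hrel v]
      exact hKstar n l (hlen.trans hlen') hmem (v : E) v.2
    have hpos' : ∀ n, 1 ≤ n → 0 < bS S' n := by
      intro n hn
      have h1 := hpos (n + 1) (by omega)
      have h2 := hdown n
      nlinarith [bS_nonneg S' n]
    obtain ⟨κ', hκ'0, hκ'⟩ := IH _ hVlt ↥V S' C rfl hC hS'C hS'ne hpos'
    have h2pos : 0 < bS S 2 := hpos 2 (by omega)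
    have hbS1 : bS S 1 ≤ C := by
      apply bS_le hne
      rintro x ⟨l, hlen, hmem, rfl⟩
      have := prod_norm_le hC hSC l hmem
      rwa [hlen, pow_one] at this
    refine ⟨min (bS S 2 / C) (κ' / (K * C)), lt_min (by positivity) (by positivity), ?_⟩
    intro n hn
    rcases eq_or_lt_of_le hn with h1 | h2
    · rw [← h1]
      calc min (bS S 2 / C) (κ' / (K * C)) * bS S 1 ≤ (bS S 2 / C) * C :=
            mul_le_mul (min_le_left _ _) hbS1 (bS_nonneg _ _) (by positivity)
        _ = bS S 2 := div_mul_cancel₀ _ (ne_of_gt hC0)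
    · obtain ⟨m, rfl⟩ : ∃ m, n = m + 2 := ⟨n - 2, by omega⟩
      have hd : bS S (m + 2) ≤ C * bS S' (m + 1) := hdown (m + 1)
      have hi : κ' * bS S' (m + 1) ≤ bS S' (m + 2) := hκ' (m + 1) (by omega)
      have hu : bS S' (m + 2) ≤ K * bS S (m + 3) := hupS' (m + 2)
      have key : κ' / (K * C) * bS S (m + 2) ≤ bS S (m + 3) := by
        rw [div_mul_eq_mul_div, div_le_iff₀ (by positivity)]
        calc κ' * bS S (m + 2) ≤ κ' * (C * bS S' (m + 1)) :=
              mul_le_mul_of_nonneg_left hd (le_of_lt hκ'0)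
          _ = C * (κ' * bS S' (m + 1)) := by ring
          _ ≤ C * bS S' (m + 2) := mul_le_mul_of_nonneg_left hi (le_of_lt hC0)
          _ ≤ C * (K * bS S (m + 3)) := mul_le_mul_of_nonneg_left hu (le_of_lt hC0)
          _ = bS S (m + 3) * (K * C) := by ring
      calc min (bS S 2 / C) (κ' / (K * C)) * bS S (m + 2)
          ≤ κ' / (K * C) * bS S (m + 2) :=
            mul_le_mul_of_nonneg_right (min_le_right _ _) (bS_nonneg _ _)
        _ ≤ bS S (m + 3) := key

end Stmt14

namespace Stmt14

noncomputable def Phi (d : ℕ) :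
    Matrix (Fin d) (Fin d) ℝ ≃ₗ[ℝ] (EuclideanSpace ℝ (Fin d) →L[ℝ] EuclideanSpace ℝ (Fin d)) :=
  Matrix.toEuclideanLin.trans LinearMap.toContinuousLinearMap

variable {d : ℕ}

lemma Phi_norm (A : Matrix (Fin d) (Fin d) ℝ) : ‖Phi d A‖ = eOpNorm A := rfl

lemma Phi_mul (A B : Matrix (Fin d) (Fin d) ℝ) : Phi d (A * B) = Phi d A * Phi d B := by
  ext x
  simp [Phi, Matrix.toEuclideanLin_apply, Matrix.mulVec_mulVec]

lemma Phi_one : Phi d 1 = 1 := by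
  ext x
  simp [Phi, Matrix.toEuclideanLin_apply]

lemma Phi_prod (l : List (Matrix (Fin d) (Fin d) ℝ)) :
    Phi d l.prod = (l.map (Phi d)).prod := by
  induction l with
  | nil => simpa using Phi_one
  | cons A t ih => rw [List.prod_cons, Phi_mul, ih, List.map_cons, List.prod_cons]

lemma unmap_list (𝒜 : Set (Matrix (Fin d) (Fin d) ℝ)) :
    ∀ l : List (EuclideanSpace ℝ (Fin d) →L[ℝ] EuclideanSpace ℝ (Fin d)),
      (∀ g ∈ l, g ∈ Phi d '' 𝒜) →
      ∃ l₀ : List (Matrix (Fin d) (Fin d) ℝ), (∀ M ∈ l₀, M ∈ 𝒜) ∧ l₀.map (Phi d) = l := by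
  intro l
  induction l with
  | nil => intro _; exact ⟨[], by simp, rfl⟩
  | cons g t ih =>
    intro h
    obtain ⟨l₀, hmem₀, rfl⟩ := ih (fun g' hg' => h g' (List.mem_cons_of_mem _ hg'))
    obtain ⟨A, hA, rfl⟩ := h g List.mem_cons_self
    refine ⟨A :: l₀, ?_, by simp⟩
    rintro M hM
    rcases List.mem_cons.1 hM with h1 | h1
    · rw [h1]; exact hA
    · exact hmem₀ M h1

lemma mirS_set_eq (𝒜 : Set (Matrix (Fin d) (Fin d) ℝ)) (n : ℕ) :
    { x | ∃ l : List (Matrix (Fin d) (Fin d) ℝ),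
      l.length = n ∧ (∀ M ∈ l, M ∈ 𝒜) ∧ x = eOpNorm l.prod } = PSet (Phi d '' 𝒜) n := by
  ext x
  constructor
  · rintro ⟨l, hlen, hmem, rfl⟩
    refine ⟨l.map (Phi d), by simp [hlen], ?_, ?_⟩
    · intro g hg
      obtain ⟨A, hA, rfl⟩ := List.mem_map.1 hg
      exact ⟨A, hmem A hA, rfl⟩
    · rw [← Phi_prod, Phi_norm]
  · rintro ⟨l, hlen, hmem, rfl⟩
    obtain ⟨l₀, hmem₀, rfl⟩ := unmap_list 𝒜 l hmem
    refine ⟨l₀, by simpa using hlen, hmem₀, by rw [← Phi_prod, Phi_norm]⟩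

lemma mirS_eq (𝒜 : Set (Matrix (Fin d) (Fin d) ℝ)) (n : ℕ) :
    mirS 𝒜 n = bS (Phi d '' 𝒜) n := by
  unfold mirS bS
  rw [mirS_set_eq]

lemma coord_abs_le (v : EuclideanSpace ℝ (Fin d)) (i : Fin d) : |v i| ≤ ‖v‖ := by
  rw [EuclideanSpace.norm_eq]
  rw [show |v i| = Real.sqrt (‖v i‖ ^ 2) by rw [Real.sqrt_sq_eq_abs, Real.norm_eq_abs, abs_abs]]
  apply Real.sqrt_le_sqrt
  exact Finset.single_le_sum (f := fun k => ‖v k‖ ^ 2) (fun k _ => by positivity)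
    (Finset.mem_univ i)

lemma entry_le (A : Matrix (Fin d) (Fin d) ℝ) (i j : Fin d) : |A i j| ≤ ‖Phi d A‖ := by
  have h1 : (Phi d A) (EuclideanSpace.single j 1) i = A i j := by
    simp [Phi, Matrix.toEuclideanLin_apply]
  have h2 : |(Phi d A) (EuclideanSpace.single j 1) i| ≤ ‖(Phi d A) (EuclideanSpace.single j 1)‖ :=
    coord_abs_le _ i
  have h3 : ‖(Phi d A) (EuclideanSpace.single j 1)‖ ≤ ‖Phi d A‖ := by
    have h4 := (Phi d A).le_opNorm (EuclideanSpace.single j (1:ℝ))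
    simpa [EuclideanSpace.norm_single] using h4
  rw [← h1]
  exact le_trans h2 h3

lemma sn_sum_le {M : Type*} [AddCommGroup M] [Module ℝ M] (N : Seminorm ℝ M) {ι : Type*}
    (s : Finset ι) (g : ι → M) : N (∑ i ∈ s, g i) ≤ ∑ i ∈ s, N (g i) := by
  classical
  induction s using Finset.induction_on with
  | empty => simp
  | insert x s hx ih =>
    rw [Finset.sum_insert hx, Finset.sum_insert hx]
    exact le_trans (map_add_le_add N _ _) (by linarith)

lemma std_smul (i j : Fin d) (c : ℝ) :
    Matrix.single i j c = c • Matrix.single i j 1 := by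
  simp [Matrix.smul_single]

lemma N_le (N : Seminorm ℝ (Matrix (Fin d) (Fin d) ℝ)) (A : Matrix (Fin d) (Fin d) ℝ) :
    N A ≤ (∑ i, ∑ j, N (Matrix.single i j 1)) * ‖Phi d A‖ := by
  calc N A = N (∑ i, ∑ j, Matrix.single i j (A i j)) := by
        rw [← Matrix.matrix_eq_sum_single A]
    _ ≤ ∑ i, ∑ j, N (Matrix.single i j (A i j)) :=
        le_trans (sn_sum_le N _ _) (Finset.sum_le_sum fun i _ => sn_sum_le N _ _)
    _ = ∑ i, ∑ j, |A i j| * N (Matrix.single i j 1) := by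
        apply Finset.sum_congr rfl; intro i _
        apply Finset.sum_congr rfl; intro j _
        rw [std_smul i j (A i j), map_smul_eq_mul, Real.norm_eq_abs]
    _ ≤ ∑ i, ∑ j, ‖Phi d A‖ * N (Matrix.single i j 1) := by
        apply Finset.sum_le_sum; intro i _
        apply Finset.sum_le_sum; intro j _
        exact mul_le_mul_of_nonneg_right (entry_le A i j) (apply_nonneg N _)
    _ = (∑ i, ∑ j, N (Matrix.single i j 1)) * ‖Phi d A‖ := by
        rw [Finset.sum_mul]
        apply Finset.sum_congr rfl; intro i _
        rw [Finset.sum_mul]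
        apply Finset.sum_congr rfl; intro j _
        ring

lemma Phi_le (A : Matrix (Fin d) (Fin d) ℝ) :
    ‖Phi d A‖ ≤ ∑ i, ∑ j, |A i j| * ‖Phi d (Matrix.single i j 1)‖ := by
  calc ‖Phi d A‖ = ‖Phi d (∑ i, ∑ j, Matrix.single i j (A i j))‖ := by
        rw [← Matrix.matrix_eq_sum_single A]
    _ = ‖∑ i, ∑ j, Phi d (Matrix.single i j (A i j))‖ := by
        rw [map_sum]
        congr 1
        apply Finset.sum_congr rfl; intro i _
        rw [map_sum]
    _ ≤ ∑ i, ‖∑ j, Phi d (Matrix.single i j (A i j))‖ := norm_sum_le _ _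
    _ ≤ ∑ i, ∑ j, ‖Phi d (Matrix.single i j (A i j))‖ :=
        Finset.sum_le_sum fun i _ => norm_sum_le _ _
    _ ≤ ∑ i, ∑ j, |A i j| * ‖Phi d (Matrix.single i j 1)‖ := by
        apply Finset.sum_le_sum; intro i _
        apply Finset.sum_le_sum; intro j _
        rw [std_smul i j (A i j), map_smul]
        have := ContinuousLinearMap.opNorm_smul_le (A i j) ((Phi d) (Matrix.single i j 1))
        simpa [Real.norm_eq_abs] using this

end Stmt14

theorem stmt14 {d : ℕ} (𝒜 : Set (Matrix (Fin d) (Fin d) ℝ))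
    (hc : IsCompact 𝒜) (hne : 𝒜.Nonempty)
    (hjsr : Tendsto (fun n : ℕ => mirS 𝒜 n ^ ((n : ℝ)⁻¹)) atTop (𝓝 1))
    (N : Seminorm ℝ (Matrix (Fin d) (Fin d) ℝ))
    (hNpos : ∀ M : Matrix (Fin d) (Fin d) ℝ, M ≠ 0 → 0 < N M)
    (a : ℕ → ℝ)
    (ha : ∀ n, a n = sSup { x | ∃ l : List (Matrix (Fin d) (Fin d) ℝ),
      l.length = n ∧ (∀ M ∈ l, M ∈ 𝒜) ∧ x = N l.prod }) :
    ∃ κ : ℝ, 0 < κ ∧ ∀ n : ℕ, 1 ≤ n → κ * a n ≤ a (n + 1) := by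
  classical
  set E := EuclideanSpace ℝ (Fin d) with hE
  set S : Set (E →L[ℝ] E) := (Stmt14.Phi d) '' 𝒜 with hSdef
  have hSne : S.Nonempty := hne.image _
  -- a uniform bound on the norms of elements of S
  have hentry : ∀ i j : Fin d, ∃ c : ℝ, 0 ≤ c ∧ ∀ M ∈ 𝒜, |M i j| ≤ c := by
    intro i j
    have hco : Continuous (fun M : Matrix (Fin d) (Fin d) ℝ => M i j) :=
      (continuous_apply j).comp (continuous_apply i)
    obtain ⟨c, hcb⟩ := isBounded_iff_forall_norm_le.mp (hc.image hco).isBounded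
    obtain ⟨M₀, hM₀⟩ := hne
    have hc0 : 0 ≤ c := le_trans (norm_nonneg _) (hcb _ ⟨M₀, hM₀, rfl⟩)
    refine ⟨c, hc0, fun M hM => ?_⟩
    have := hcb (M i j) ⟨M, hM, rfl⟩
    rwa [Real.norm_eq_abs] at this
  choose cE hcE0 hcE using hentry
  set C : ℝ := (∑ i, ∑ j, cE i j * ‖Stmt14.Phi d (Matrix.single i j 1)‖) + 1 with hCdef
  have hCsum : 0 ≤ ∑ i, ∑ j, cE i j * ‖Stmt14.Phi d (Matrix.single i j 1)‖ :=
    Finset.sum_nonneg fun i _ => Finset.sum_nonneg fun j _ =>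
      mul_nonneg (hcE0 i j) (norm_nonneg _)
  have hC1 : 1 ≤ C := by rw [hCdef]; linarith
  have hSC : ∀ g ∈ S, ‖g‖ ≤ C := by
    rintro g ⟨M, hM, rfl⟩
    calc ‖Stmt14.Phi d M‖
        ≤ ∑ i, ∑ j, |M i j| * ‖Stmt14.Phi d (Matrix.single i j 1)‖ := Stmt14.Phi_le M
      _ ≤ ∑ i, ∑ j, cE i j * ‖Stmt14.Phi d (Matrix.single i j 1)‖ := by
          apply Finset.sum_le_sum; intro i _
          apply Finset.sum_le_sum; intro j _
          exact mul_le_mul_of_nonneg_right (hcE i j M hM) (norm_nonneg _)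
      _ ≤ C := by rw [hCdef]; linarith
  -- transfer hjsr
  have hjsr' : Tendsto (fun n : ℕ => Stmt14.bS S n ^ ((n : ℝ)⁻¹)) atTop (𝓝 1) := by
    have heq : (fun n : ℕ => mirS 𝒜 n ^ ((n : ℝ)⁻¹))
        = fun n : ℕ => Stmt14.bS S n ^ ((n : ℝ)⁻¹) := by
      funext n; rw [Stmt14.mirS_eq]
    rwa [heq] at hjsr
  -- positivity of bS
  have hpos : ∀ n, 1 ≤ n → 0 < Stmt14.bS S n := by
    intro n hn
    rcases lt_or_ge 0 (Stmt14.bS S n) with h | h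
    · exact h
    exfalso
    have hzero : Stmt14.bS S n = 0 := le_antisymm h (Stmt14.bS_nonneg S n)
    have hmul : ∀ k : ℕ, Stmt14.bS S ((k + 1) * n) = 0 := by
      intro k
      induction k with
      | zero => simpa using hzero
      | succ k ih =>
        apply le_antisymm _ (Stmt14.bS_nonneg _ _)
        apply Stmt14.bS_le hSne
        rintro x ⟨l, hlen, hmem, rfl⟩
        have hlenge : (k + 1) * n ≤ l.length := by rw [hlen]; nlinarith
        have h1 : (l.take ((k + 1) * n)).length = (k + 1) * n := by
          rw [List.length_take]; omega
        have h2 : ‖(l.take ((k + 1) * n)).prod‖ ≤ 0 := by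
          have := Stmt14.le_bS hC1 hSC h1 (fun f hf => hmem f (List.mem_of_mem_take hf))
          rwa [ih] at this
        have h2' : ‖(l.take ((k + 1) * n)).prod‖ = 0 := le_antisymm h2 (norm_nonneg _)
        have h4 : l.prod = (l.take ((k + 1) * n)).prod * (l.drop ((k + 1) * n)).prod := by
          rw [← List.prod_append, List.take_append_drop]
        rw [h4]
        calc ‖(l.take ((k + 1) * n)).prod * (l.drop ((k + 1) * n)).prod‖
            ≤ ‖(l.take ((k + 1) * n)).prod‖ * ‖(l.drop ((k + 1) * n)).prod‖ := norm_mul_le _ _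
          _ = 0 := by rw [h2', zero_mul]
    have htend : Tendsto (fun k : ℕ => (k + 1) * n) atTop atTop := by
      apply Filter.tendsto_atTop_atTop.mpr
      intro b
      exact ⟨b, fun c hbc => by nlinarith⟩
    have h5 := hjsr'.comp htend
    have h6 : (fun k : ℕ => Stmt14.bS S ((k + 1) * n) ^ ((((k + 1) * n : ℕ) : ℝ))⁻¹)
        = fun _ : ℕ => (0 : ℝ) := by
      funext k
      rw [hmul k]
      apply Real.zero_rpow
      apply inv_ne_zero
      have hgt : (0 : ℝ) < (((k + 1) * n : ℕ) : ℝ) := by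
        have h7 : 0 < (k + 1) * n := Nat.mul_pos (Nat.succ_pos k) (by omega)
        exact_mod_cast h7
      exact ne_of_gt hgt
    rw [show (fun k : ℕ => Stmt14.bS S ((k + 1) * n) ^ ((((k + 1) * n : ℕ) : ℝ))⁻¹)
        = (fun n : ℕ => Stmt14.bS S n ^ ((n : ℝ)⁻¹)) ∘ (fun k : ℕ => (k + 1) * n) from rfl] at h6
    rw [h6] at h5
    exact one_ne_zero (tendsto_nhds_unique h5 tendsto_const_nhds)
  -- main inequality for bS
  obtain ⟨κ₀, hκ₀, hmain⟩ :=
    Stmt14.main (Module.finrank ℝ E) E S C rfl hC1 hSC hSne hpos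
  -- seminorm upper comparison
  set cN : ℝ := (∑ i, ∑ j, N (Matrix.single i j 1)) + 1 with hcNdef
  have hcNsum : 0 ≤ ∑ i, ∑ j, N (Matrix.single i j 1) :=
    Finset.sum_nonneg fun i _ => Finset.sum_nonneg fun j _ => apply_nonneg N _
  have hcN0 : 0 < cN := by rw [hcNdef]; linarith
  have hNle : ∀ A, N A ≤ cN * ‖Stmt14.Phi d A‖ := by
    intro A
    calc N A ≤ (∑ i, ∑ j, N (Matrix.single i j 1)) * ‖Stmt14.Phi d A‖ := Stmt14.N_le N A
      _ ≤ cN * ‖Stmt14.Phi d A‖ := by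
          apply mul_le_mul_of_nonneg_right _ (norm_nonneg _)
          rw [hcNdef]; linarith
  -- |N X - N Y| ≤ N (X - Y)
  have habs : ∀ X Y : Matrix (Fin d) (Fin d) ℝ, |N X - N Y| ≤ N (X - Y) := by
    intro X Y
    rw [abs_sub_le_iff]
    constructor
    · have h1 := map_add_le_add N (X - Y) Y
      rw [sub_add_cancel] at h1
      linarith
    · have h1 := map_add_le_add N (Y - X) X
      rw [sub_add_cancel] at h1
      have h2 : N (Y - X) = N (X - Y) := by
        rw [show Y - X = -(X - Y) from (neg_sub X Y).symm, map_neg_eq_map]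
      linarith
  -- Nontrivial E
  haveI hNT : Nontrivial E := by
    rcases subsingleton_or_nontrivial E with hsub | hnt
    · exfalso
      have h1 := hpos 1 le_rfl
      have h2 : Stmt14.bS S 1 ≤ 0 := by
        apply Stmt14.bS_le hSne
        rintro x ⟨l, hlen, hmem, rfl⟩
        have h3 : l.prod = 0 := Subsingleton.elim _ _
        rw [h3, norm_zero]
      linarith
    · exact hnt
  -- lower comparison constant via minimum on the sphere
  set ν : (E →L[ℝ] E) → ℝ := fun g => N ((Stmt14.Phi d).symm g) with hνdef
  have hνcont : Continuous ν := by
    refine (LipschitzWith.of_dist_le_mul (K := ⟨cN, le_of_lt hcN0⟩) ?_).continuous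
    intro g h
    rw [Real.dist_eq, dist_eq_norm]
    calc |ν g - ν h| ≤ N ((Stmt14.Phi d).symm g - (Stmt14.Phi d).symm h) := habs _ _
      _ = N ((Stmt14.Phi d).symm (g - h)) :=
          (congrArg N (map_sub (Stmt14.Phi d).symm g h)).symm
      _ ≤ cN * ‖Stmt14.Phi d ((Stmt14.Phi d).symm (g - h))‖ := hNle _
      _ = ↑(⟨cN, le_of_lt hcN0⟩ : NNReal) * ‖g - h‖ := by
          rw [LinearEquiv.apply_symm_apply]
  have hsphne : (Metric.sphere (0 : E →L[ℝ] E) 1).Nonempty := by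
    refine ⟨1, ?_⟩
    rw [Metric.mem_sphere, dist_zero_right]
    exact ContinuousLinearMap.norm_id
  obtain ⟨g₀, hg₀mem, hg₀min⟩ :=
    (isCompact_sphere (0 : E →L[ℝ] E) 1).exists_isMinOn hsphne hνcont.continuousOn
  set mm : ℝ := ν g₀ with hmmdef
  have hg₀norm : ‖g₀‖ = 1 := by rwa [Metric.mem_sphere, dist_zero_right] at hg₀mem
  have hmm0 : 0 < mm := by
    apply hNpos
    intro h0
    have h1 : g₀ = Stmt14.Phi d ((Stmt14.Phi d).symm g₀) := (LinearEquiv.apply_symm_apply _ _).symm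
    rw [h0, map_zero] at h1
    rw [h1, norm_zero] at hg₀norm
    exact one_ne_zero hg₀norm.symm
  have hNge : ∀ A : Matrix (Fin d) (Fin d) ℝ, mm * ‖Stmt14.Phi d A‖ ≤ N A := by
    intro A
    rcases eq_or_ne A 0 with rfl | hA0
    · simp
    · have hPhiA : Stmt14.Phi d A ≠ 0 := by
        intro h
        apply hA0
        have := congrArg (Stmt14.Phi d).symm h
        rwa [LinearEquiv.symm_apply_apply, map_zero] at this
      have hr : 0 < ‖Stmt14.Phi d A‖ := norm_pos_iff.2 hPhiA
      set g : E →L[ℝ] E := ‖Stmt14.Phi d A‖⁻¹ • Stmt14.Phi d A with hgdef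
      have hgmem : g ∈ Metric.sphere (0 : E →L[ℝ] E) 1 := by
        have hns : ‖(‖Stmt14.Phi d A‖⁻¹ : ℝ) • Stmt14.Phi d A‖
            = ‖(‖Stmt14.Phi d A‖⁻¹ : ℝ)‖ * ‖Stmt14.Phi d A‖ := norm_smul (α := ℝ) (β := E →L[ℝ] E) _ _
        rw [Metric.mem_sphere, dist_zero_right, hgdef, hns, norm_inv, norm_norm]
        field_simp
      have h1 : mm ≤ ν g := hg₀min hgmem
      have h2 : ν g = ‖Stmt14.Phi d A‖⁻¹ * N A := by
        rw [hνdef]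
        show N ((Stmt14.Phi d).symm (‖Stmt14.Phi d A‖⁻¹ • Stmt14.Phi d A)) = _
        rw [map_smul, LinearEquiv.symm_apply_apply, map_smul_eq_mul, Real.norm_eq_abs,
          abs_of_pos (inv_pos.2 hr)]
      rw [h2] at h1
      calc mm * ‖Stmt14.Phi d A‖ ≤ (‖Stmt14.Phi d A‖⁻¹ * N A) * ‖Stmt14.Phi d A‖ :=
            mul_le_mul_of_nonneg_right h1 (le_of_lt hr)
        _ = N A := by field_simp
  -- a-sets facts
  have hAset_ne : ∀ n : ℕ, { x | ∃ l : List (Matrix (Fin d) (Fin d) ℝ),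
      l.length = n ∧ (∀ M ∈ l, M ∈ 𝒜) ∧ x = N l.prod }.Nonempty := by
    intro n
    obtain ⟨M₀, hM₀⟩ := hne
    exact ⟨N (List.replicate n M₀).prod, List.replicate n M₀, List.length_replicate,
      fun M hM => by rw [List.eq_of_mem_replicate hM]; exact hM₀, rfl⟩
  have hAset_bdd : ∀ n : ℕ, BddAbove { x | ∃ l : List (Matrix (Fin d) (Fin d) ℝ),
      l.length = n ∧ (∀ M ∈ l, M ∈ 𝒜) ∧ x = N l.prod } := by
    intro n
    refine ⟨cN * C ^ n, ?_⟩
    rintro x ⟨l, hlen, hmem, rfl⟩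
    have h1 : ‖Stmt14.Phi d l.prod‖ ≤ C ^ n := by
      rw [Stmt14.Phi_prod]
      have h2 : ∀ g ∈ l.map (Stmt14.Phi d), g ∈ S := by
        intro g hg
        obtain ⟨A, hA, rfl⟩ := List.mem_map.1 hg
        exact ⟨A, hmem A hA, rfl⟩
      have := Stmt14.prod_norm_le hC1 hSC _ h2
      rwa [List.length_map, hlen] at this
    calc N l.prod ≤ cN * ‖Stmt14.Phi d l.prod‖ := hNle _
      _ ≤ cN * C ^ n := mul_le_mul_of_nonneg_left h1 (le_of_lt hcN0)
  -- comparisons between a and bS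
  have hup_a : ∀ n : ℕ, mm * Stmt14.bS S n ≤ a n := by
    intro n
    rw [ha n]
    have h1 : Stmt14.bS S n ≤ (sSup { x | ∃ l : List (Matrix (Fin d) (Fin d) ℝ),
        l.length = n ∧ (∀ M ∈ l, M ∈ 𝒜) ∧ x = N l.prod }) / mm := by
      apply Stmt14.bS_le hSne
      rintro x ⟨l, hlen, hmem, rfl⟩
      obtain ⟨l₀, hmem₀, rfl⟩ := Stmt14.unmap_list 𝒜 l hmem
      rw [le_div_iff₀' hmm0]
      rw [← Stmt14.Phi_prod]
      calc mm * ‖Stmt14.Phi d l₀.prod‖ ≤ N l₀.prod := hNge _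
        _ ≤ sSup _ := le_csSup (hAset_bdd n) ⟨l₀, by simpa using hlen, hmem₀, rfl⟩
    calc mm * Stmt14.bS S n ≤ mm * ((sSup _) / mm) := mul_le_mul_of_nonneg_left h1 (le_of_lt hmm0)
      _ = _ := by field_simp
  have hdown_a : ∀ n : ℕ, a n ≤ cN * Stmt14.bS S n := by
    intro n
    rw [ha n]
    apply csSup_le (hAset_ne n)
    rintro x ⟨l, hlen, hmem, rfl⟩
    have h1 : ‖Stmt14.Phi d l.prod‖ ≤ Stmt14.bS S n := by
      rw [Stmt14.Phi_prod]
      apply Stmt14.le_bS hC1 hSC (by rw [List.length_map, hlen])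
      intro g hg
      obtain ⟨A, hA, rfl⟩ := List.mem_map.1 hg
      exact ⟨A, hmem A hA, rfl⟩
    calc N l.prod ≤ cN * ‖Stmt14.Phi d l.prod‖ := hNle _
      _ ≤ cN * Stmt14.bS S n := mul_le_mul_of_nonneg_left h1 (le_of_lt hcN0)
  -- final assembly
  refine ⟨(mm * κ₀) / cN, by positivity, ?_⟩
  intro n hn
  have hchain : ((mm * κ₀) / cN) * (cN * Stmt14.bS S n) = mm * (κ₀ * Stmt14.bS S n) := by
    field_simp
  calc ((mm * κ₀) / cN) * a n ≤ ((mm * κ₀) / cN) * (cN * Stmt14.bS S n) := by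
        apply mul_le_mul_of_nonneg_left (hdown_a n)
        positivity
    _ = mm * (κ₀ * Stmt14.bS S n) := hchain
    _ ≤ mm * Stmt14.bS S (n + 1) := mul_le_mul_of_nonneg_left (hmain n hn) (le_of_lt hmm0)
    _ ≤ a (n + 1) := hup_a (n + 1)
end
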